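/- arXiv:2408.08382 — 7 statements merged into one kernel-verified Lean document; each statement's English description precedes it below -/
import Mathlib

section
/- Let 𝒢 be a hereditary family of finite digraphs and let f : ℕ → ℝ⁺ be a monotone non-decreasing function such that every digraph G ∈ 𝒢 on n vertices has a clique of size at least f(n)/MAIS(G). Then every digraph G ∈ 𝒢 on n vertices satisfies CC(G) ≤ (∑_{i=1}^{n} 1/f(i)) · MAIS(G). -/
/-- A digraph: a finite vertex set (a finset of naturals) together with an
irreflexive edge relation. -/
structure Digr where
  verts : Finset ℕ
  Adj : ℕ → ℕ → Prop
  loopless : ∀ v, ¬ Adj v v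

namespace Digr

/-- A clique of a digraph: a set of vertices every two distinct members of which
are joined by directed edges in both directions. -/
def IsClique (G : Digr) (C : Finset ℕ) : Prop :=
  C ⊆ G.verts ∧ ∀ u ∈ C, ∀ v ∈ C, u ≠ v → G.Adj u v ∧ G.Adj v u

/-- An acyclic set of a digraph: a set of vertices inducing a sub-digraph with
no directed cycle. -/
def IsAcyclicSet (G : Digr) (I : Finset ℕ) : Prop :=
  I ⊆ G.verts ∧ ∀ v, ¬ Relation.TransGen (fun a b => a ∈ I ∧ b ∈ I ∧ G.Adj a b) v v

/-- MAIS: the maximum size of an acyclic set. -/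
noncomputable def mais (G : Digr) : ℕ :=
  sSup {k | ∃ I, G.IsAcyclicSet I ∧ I.card = k}

/-- ω: the maximum size of a clique. -/
noncomputable def cliqueNum (G : Digr) : ℕ :=
  sSup {k | ∃ C, G.IsClique C ∧ C.card = k}

/-- CC: the directed clique cover number, i.e. the minimum number of cliques
whose union is the vertex set. -/
noncomputable def cc (G : Digr) : ℕ :=
  sInf {k | ∃ 𝒞 : Finset (Finset ℕ), 𝒞.card = k ∧ (∀ C ∈ 𝒞, G.IsClique C) ∧
    ∀ v ∈ G.verts, ∃ C ∈ 𝒞, v ∈ C}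

/-- The sub-digraph induced by a set of vertices. -/
def induce (G : Digr) (S : Finset ℕ) : Digr where
  verts := S ∩ G.verts
  Adj := fun a b => a ∈ S ∧ b ∈ S ∧ G.Adj a b
  loopless := fun v h => G.loopless v h.2.2

/-- A family of digraphs is hereditary if it is closed under taking induced
sub-digraphs. -/
def Hereditary (𝒢 : Set Digr) : Prop :=
  ∀ G ∈ 𝒢, ∀ S ⊆ G.verts, G.induce S ∈ 𝒢

lemma mais_bddAbove (G : Digr) : BddAbove {k | ∃ I, G.IsAcyclicSet I ∧ I.card = k} := by
  refine ⟨G.verts.card, ?_⟩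
  rintro k ⟨I, hI, rfl⟩
  exact Finset.card_le_card hI.1

lemma one_le_mais (G : Digr) (h : G.verts.Nonempty) : 1 ≤ G.mais := by
  obtain ⟨v, hv⟩ := h
  have hac : G.IsAcyclicSet {v} := by
    constructor
    · simpa using hv
    · intro w hw
      have : ∀ a b, Relation.TransGen (fun a b => a ∈ ({v} : Finset ℕ) ∧ b ∈ ({v} : Finset ℕ) ∧ G.Adj a b) a b → False := by
        intro a b hab
        induction hab with
        | single h => exact G.loopless v (by
            obtain ⟨ha, hb, hadj⟩ := h
            simp only [Finset.mem_singleton] at ha hb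
            subst ha; subst hb; exact hadj)
        | tail _ _ ih => exact ih
      exact this w w hw
  have : (1 : ℕ) ∈ {k | ∃ I, G.IsAcyclicSet I ∧ I.card = k} := ⟨{v}, hac, Finset.card_singleton v⟩
  exact le_csSup (mais_bddAbove G) this

lemma mais_induce_le (G : Digr) (S : Finset ℕ) : (G.induce S).mais ≤ G.mais := by
  have hac : (G.induce S).IsAcyclicSet ∅ := by
    constructor
    · simp
    · intro v h
      cases h with
      | single h => simp at h
      | tail _ h => simp at h
  have hne : {k | ∃ I, (G.induce S).IsAcyclicSet I ∧ I.card = k}.Nonempty :=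
    ⟨0, ∅, hac, by simp⟩
  apply csSup_le_csSup (mais_bddAbove G) hne
  rintro k ⟨I, ⟨hsub, hcyc⟩, rfl⟩
  refine ⟨I, ⟨?_, ?_⟩, rfl⟩
  · intro x hx
    have := hsub hx
    simp only [induce, Finset.mem_inter] at this
    exact this.2
  · intro v hv
    apply hcyc v
    refine Relation.TransGen.mono ?_ v v hv
    rintro a b ⟨ha, hb, hadj⟩
    refine ⟨ha, hb, ?_, ?_, hadj⟩
    · exact (Finset.mem_inter.mp (hsub ha)).1
    · exact (Finset.mem_inter.mp (hsub hb)).1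

lemma cc_set_nonempty (G : Digr) :
    {k | ∃ 𝒞 : Finset (Finset ℕ), 𝒞.card = k ∧ (∀ C ∈ 𝒞, G.IsClique C) ∧
      ∀ v ∈ G.verts, ∃ C ∈ 𝒞, v ∈ C}.Nonempty := by
  refine ⟨(G.verts.image fun v => ({v} : Finset ℕ)).card, G.verts.image fun v => {v}, rfl, ?_, ?_⟩
  · intro C hC
    obtain ⟨v, hv, rfl⟩ := Finset.mem_image.mp hC
    exact ⟨by simpa using hv, by intro u hu w hw huw; simp at hu hw; subst hu; subst hw; exact absurd rfl huw⟩
  · intro v hv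
    exact ⟨{v}, Finset.mem_image_of_mem _ hv, Finset.mem_singleton_self v⟩

lemma cc_spec (G : Digr) : ∃ 𝒞 : Finset (Finset ℕ), 𝒞.card = G.cc ∧
    (∀ C ∈ 𝒞, G.IsClique C) ∧ ∀ v ∈ G.verts, ∃ C ∈ 𝒞, v ∈ C :=
  Nat.sInf_mem (cc_set_nonempty G)

lemma cc_le_induce_add_one (G : Digr) (C : Finset ℕ) (hC : G.IsClique C) :
    G.cc ≤ (G.induce (G.verts \ C)).cc + 1 := by
  obtain ⟨𝒞, hcard, hclq, hcov⟩ := cc_spec (G.induce (G.verts \ C))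
  have hmem : (insert C 𝒞).card ∈ {k | ∃ 𝒞 : Finset (Finset ℕ), 𝒞.card = k ∧
      (∀ D ∈ 𝒞, G.IsClique D) ∧ ∀ v ∈ G.verts, ∃ D ∈ 𝒞, v ∈ D} := by
    refine ⟨insert C 𝒞, rfl, ?_, ?_⟩
    · intro D hD
      rcases Finset.mem_insert.mp hD with rfl | hD
      · exact hC
      · obtain ⟨hsub, hadj⟩ := hclq D hD
        refine ⟨?_, fun u hu v hv huv => ?_⟩
        · intro x hx
          exact (Finset.mem_inter.mp (hsub hx)).2
        · exact ⟨(hadj u hu v hv huv).1.2.2, (hadj u hu v hv huv).2.2.2⟩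
    · intro v hv
      by_cases hvC : v ∈ C
      · exact ⟨C, Finset.mem_insert_self _ _, hvC⟩
      · obtain ⟨D, hD, hvD⟩ := hcov v (by simp [induce, hv, hvC])
        exact ⟨D, Finset.mem_insert_of_mem hD, hvD⟩
  calc G.cc ≤ (insert C 𝒞).card := Nat.sInf_le hmem
    _ ≤ 𝒞.card + 1 := Finset.card_insert_le _ _
    _ = _ := by rw [hcard]

end Digr

/-- Let 𝒢 be a hereditary family of digraphs and `f : ℕ → ℝ⁺`
monotone non-decreasing such that every `G ∈ 𝒢` on `n` vertices has a clique of
size at least `f n / MAIS G`. Then every `G ∈ 𝒢` on `n` vertices satisfies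
`CC G ≤ (∑ i in [1..n], 1 / f i) * MAIS G`. -/
theorem stmt0 (𝒢 : Set Digr) (h𝒢 : Digr.Hereditary 𝒢)
    (f : ℕ → ℝ) (hfpos : ∀ n, 0 < f n) (hfmono : Monotone f)
    (hclique : ∀ G ∈ 𝒢, ∃ C : Finset ℕ, G.IsClique C ∧
      f G.verts.card / (G.mais : ℝ) ≤ (C.card : ℝ)) :
    ∀ G ∈ 𝒢, (G.cc : ℝ) ≤ (∑ i ∈ Finset.Icc 1 G.verts.card, 1 / f i) * (G.mais : ℝ) := by
  suffices H : ∀ n, ∀ G ∈ 𝒢, G.verts.card = n →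
      (G.cc : ℝ) ≤ (∑ i ∈ Finset.Icc 1 G.verts.card, 1 / f i) * (G.mais : ℝ) by
    intro G hG; exact H G.verts.card G hG rfl
  intro n
  induction n using Nat.strong_induction_on with
  | _ n ih =>
  intro G hG hn
  by_cases hempty : G.verts = ∅
  · have h0 : G.cc = 0 := by
      have hmem : (0 : ℕ) ∈ {k | ∃ 𝒞 : Finset (Finset ℕ), 𝒞.card = k ∧
          (∀ C ∈ 𝒞, G.IsClique C) ∧ ∀ v ∈ G.verts, ∃ C ∈ 𝒞, v ∈ C} :=
        ⟨∅, by simp, by simp, by simp [hempty]⟩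
      exact Nat.le_zero.mp (Nat.sInf_le hmem)
    rw [h0]
    push_cast
    have hA : 0 ≤ ∑ i ∈ Finset.Icc 1 G.verts.card, 1 / f i :=
      Finset.sum_nonneg fun i _ => le_of_lt (by have := hfpos i; positivity)
    exact mul_nonneg hA (Nat.cast_nonneg _)
  · obtain ⟨C, hCclq, hCcard⟩ := hclique G hG
    have hvne : G.verts.Nonempty := Finset.nonempty_iff_ne_empty.mpr hempty
    have hm1 : 1 ≤ G.mais := G.one_le_mais hvne
    have hmpos : (0 : ℝ) < (G.mais : ℝ) := by exact_mod_cast hm1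
    have hCposR : (0 : ℝ) < (C.card : ℝ) :=
      lt_of_lt_of_le (div_pos (hfpos _) hmpos) hCcard
    have hCpos : 0 < C.card := by exact_mod_cast hCposR
    set S := G.verts \ C with hS
    have hSsub : S ⊆ G.verts := Finset.sdiff_subset
    have hG' : G.induce S ∈ 𝒢 := h𝒢 G hG S hSsub
    have hverts' : (G.induce S).verts = S := by
      simp only [Digr.induce]
      exact Finset.inter_eq_left.mpr hSsub
    have hCle : C.card ≤ n := hn ▸ Finset.card_le_card hCclq.1
    have hmcard : S.card = n - C.card := by
      rw [hS, Finset.card_sdiff_of_subset hCclq.1, hn]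
    set m := S.card with hm
    have hnpos : 0 < n := by
      rw [← hn]; exact Finset.card_pos.mpr hvne
    have hmlt : m < n := by
      rw [hmcard]; exact Nat.sub_lt hnpos hCpos
    have hmle : m ≤ n := le_of_lt hmlt
    have IH : ((G.induce S).cc : ℝ) ≤
        (∑ i ∈ Finset.Icc 1 m, 1 / f i) * ((G.induce S).mais : ℝ) := by
      have := ih m hmlt (G.induce S) hG' (by rw [hverts'])
      rwa [hverts'] at this
    have hA : 0 ≤ ∑ i ∈ Finset.Icc 1 m, 1 / f i :=
      Finset.sum_nonneg fun i _ => le_of_lt (by have := hfpos i; positivity)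
    have hmais' : ((G.induce S).mais : ℝ) ≤ (G.mais : ℝ) := by
      exact_mod_cast G.mais_induce_le S
    have step1 : (G.cc : ℝ) ≤ ((G.induce S).cc : ℝ) + 1 := by
      have := G.cc_le_induce_add_one C hCclq
      rw [← hS] at this
      exact_mod_cast this
    -- lower bound on the tail sum
    have htail : (1 : ℝ) ≤ (∑ i ∈ Finset.Ioc m n, 1 / f i) * (G.mais : ℝ) := by
      have hterm : ∀ i ∈ Finset.Ioc m n, 1 / f n ≤ 1 / f i := by
        intro i hi
        have hin : i ≤ n := (Finset.mem_Ioc.mp hi).2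
        exact one_div_le_one_div_of_le (hfpos i) (hfmono hin)
      have hcardIoc : (Finset.Ioc m n).card = C.card := by
        rw [Nat.card_Ioc, hmcard, Nat.sub_sub_self hCle]
      have hsum : (C.card : ℝ) * (1 / f n) ≤ ∑ i ∈ Finset.Ioc m n, 1 / f i := by
        have := Finset.card_nsmul_le_sum (Finset.Ioc m n) (fun i => 1 / f i) (1 / f n) hterm
        rw [hcardIoc] at this
        simpa [nsmul_eq_mul] using this
      have h1 : 1 / (G.mais : ℝ) ≤ ∑ i ∈ Finset.Ioc m n, 1 / f i := by
        have : 1 / (G.mais : ℝ) = (f n / (G.mais : ℝ)) * (1 / f n) := by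
          have hfn : f n ≠ 0 := (hfpos n).ne'
          have hmn : (G.mais : ℝ) ≠ 0 := hmpos.ne'
          field_simp
        rw [this]
        calc (f n / (G.mais : ℝ)) * (1 / f n)
            ≤ (C.card : ℝ) * (1 / f n) := by
              apply mul_le_mul_of_nonneg_right _ (le_of_lt (by have := hfpos n; positivity))
              rw [← hn]; exact hCcard
          _ ≤ _ := hsum
      exact (div_le_iff₀ hmpos).mp h1
    have hsplit : ∑ i ∈ Finset.Icc 1 n, 1 / f i =
        (∑ i ∈ Finset.Icc 1 m, 1 / f i) + ∑ i ∈ Finset.Ioc m n, 1 / f i := by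
      rw [show (1:ℕ) = 0 + 1 from rfl, Finset.Icc_add_one_left_eq_Ioc, Finset.Icc_add_one_left_eq_Ioc,
        Finset.sum_Ioc_consecutive _ (Nat.zero_le m) hmle]
    calc (G.cc : ℝ) ≤ ((G.induce S).cc : ℝ) + 1 := step1
      _ ≤ (∑ i ∈ Finset.Icc 1 m, 1 / f i) * ((G.induce S).mais : ℝ) + 1 := by linarith [IH]
      _ ≤ (∑ i ∈ Finset.Icc 1 m, 1 / f i) * (G.mais : ℝ) +
          (∑ i ∈ Finset.Ioc m n, 1 / f i) * (G.mais : ℝ) := by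
            have := mul_le_mul_of_nonneg_left hmais' hA
            linarith [htail]
      _ = (∑ i ∈ Finset.Icc 1 G.verts.card, 1 / f i) * (G.mais : ℝ) := by
            rw [hn, hsplit, add_mul]
end

section
/- For all integers s,t ≥ 1, every digraph on at least C(s+t-2, s-1) · 2^{t-1} vertices contains a clique of size at least s or an acyclic set of size at least t (a directed analogue of the Erdős–Szekeres Ramsey bound), where C(·,·) denotes the binomial coefficient. -/
namespace DigrAux

open Digr

lemma clique_of_induce {G : Digr} {S C : Finset ℕ} (h : (G.induce S).IsClique C) :
    G.IsClique C := by
  refine ⟨h.1.trans Finset.inter_subset_right, fun u hu w hw huw => ?_⟩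
  obtain ⟨h1, h2⟩ := h.2 u hu w hw huw
  exact ⟨h1.2.2, h2.2.2⟩

lemma acyclic_of_induce {G : Digr} {S I : Finset ℕ} (h : (G.induce S).IsAcyclicSet I) :
    G.IsAcyclicSet I := by
  refine ⟨h.1.trans Finset.inter_subset_right, fun v hv => h.2 v ?_⟩
  have hIS : I ⊆ S := h.1.trans Finset.inter_subset_left
  exact Relation.TransGen.mono (fun a b hab => ⟨hab.1, hab.2.1, hIS hab.1, hIS hab.2.1, hab.2.2⟩) _ _ hv

lemma clique_singleton {G : Digr} {v : ℕ} (hv : v ∈ G.verts) : G.IsClique {v} := by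
  refine ⟨Finset.singleton_subset_iff.mpr hv, fun u hu w hw huw => ?_⟩
  simp only [Finset.mem_singleton] at hu hw
  exact absurd (hu.trans hw.symm) huw

lemma acyclic_singleton {G : Digr} {v : ℕ} (hv : v ∈ G.verts) : G.IsAcyclicSet {v} := by
  refine ⟨Finset.singleton_subset_iff.mpr hv, fun w hw => ?_⟩
  cases hw with
  | single h =>
      exact G.loopless w h.2.2
  | tail h1 h2 =>
      obtain ⟨ha, hb, hadj⟩ := h2
      simp only [Finset.mem_singleton] at ha hb
      rw [ha, hb] at hadj
      exact G.loopless v hadj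

lemma insert_clique {G : Digr} {C : Finset ℕ} {v : ℕ} (hC : G.IsClique C) (hv : v ∈ G.verts)
    (h : ∀ u ∈ C, G.Adj v u ∧ G.Adj u v) : G.IsClique (insert v C) := by
  refine ⟨Finset.insert_subset hv hC.1, fun u hu w hw huw => ?_⟩
  rcases Finset.mem_insert.mp hu with hu' | hu' <;> rcases Finset.mem_insert.mp hw with hw' | hw'
  · exact absurd (hu'.trans hw'.symm) huw
  · subst hu'; exact h w hw'
  · subst hw'; exact ⟨(h u hu').2, (h u hu').1⟩
  · exact hC.2 u hu' w hw' huw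

/-- Adding a vertex with no incoming edges from the set keeps it acyclic. -/
lemma insert_acyclic_no_in {G : Digr} {I : Finset ℕ} {v : ℕ} (hI : G.IsAcyclicSet I)
    (hv : v ∈ G.verts) (hno : ∀ a ∈ I, ¬ G.Adj a v) : G.IsAcyclicSet (insert v I) := by
  set r'' := fun a b => a ∈ insert v I ∧ b ∈ insert v I ∧ G.Adj a b with hr''
  have hnoin : ∀ a, ¬ r'' a v := by
    rintro a ⟨ha, _, hadj⟩
    rcases Finset.mem_insert.mp ha with rfl | ha
    · exact G.loopless a hadj
    · exact hno a ha hadj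
  refine ⟨Finset.insert_subset hv hI.1, fun w hw => ?_⟩
  have claim : ∀ x y, Relation.TransGen r'' x y → x ≠ v →
      Relation.TransGen (fun a b => a ∈ I ∧ b ∈ I ∧ G.Adj a b) x y ∧ y ≠ v := by
    intro x y h hx
    induction h with
    | @single y h =>
        have hy : y ≠ v := fun he => hnoin x (he ▸ h)
        exact ⟨Relation.TransGen.single
          ⟨(Finset.mem_insert.mp h.1).resolve_left hx,
           (Finset.mem_insert.mp h.2.1).resolve_left hy, h.2.2⟩, hy⟩
    | @tail b y h1 h2 ih =>
        obtain ⟨ht, hb⟩ := ih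
        have hy : y ≠ v := fun he => hnoin b (he ▸ h2)
        exact ⟨ht.tail ⟨(Finset.mem_insert.mp h2.1).resolve_left hb,
          (Finset.mem_insert.mp h2.2.1).resolve_left hy, h2.2.2⟩, hy⟩
  by_cases hwv : w = v
  · subst hwv
    cases hw with
    | single h => exact hnoin w h
    | tail h1 h2 => exact hnoin _ h2
  · exact hI.2 w (claim w w hw hwv).1

/-- Adding a vertex with no outgoing edges into the set keeps it acyclic. -/
lemma insert_acyclic_no_out {G : Digr} {I : Finset ℕ} {v : ℕ} (hI : G.IsAcyclicSet I)
    (hv : v ∈ G.verts) (hno : ∀ a ∈ I, ¬ G.Adj v a) : G.IsAcyclicSet (insert v I) := by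
  set r'' := fun a b => a ∈ insert v I ∧ b ∈ insert v I ∧ G.Adj a b with hr''
  have hnoout : ∀ a, ¬ r'' v a := by
    rintro a ⟨_, ha, hadj⟩
    rcases Finset.mem_insert.mp ha with rfl | ha
    · exact G.loopless a hadj
    · exact hno a ha hadj
  refine ⟨Finset.insert_subset hv hI.1, fun w hw => ?_⟩
  have claim : ∀ x y, Relation.TransGen r'' x y → y ≠ v →
      Relation.TransGen (fun a b => a ∈ I ∧ b ∈ I ∧ G.Adj a b) x y ∧ x ≠ v := by
    intro x y h hy
    induction h using Relation.TransGen.head_induction_on with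
    | @single x h =>
        have hx : x ≠ v := fun he => hnoout y (he ▸ h)
        exact ⟨Relation.TransGen.single
          ⟨(Finset.mem_insert.mp h.1).resolve_left hx,
           (Finset.mem_insert.mp h.2.1).resolve_left hy, h.2.2⟩, hx⟩
    | @head x c h1 h2 ih =>
        obtain ⟨ht, hc⟩ := ih
        have hx : x ≠ v := fun he => hnoout c (he ▸ h1)
        exact ⟨ht.head ⟨(Finset.mem_insert.mp h1.1).resolve_left hx,
          (Finset.mem_insert.mp h1.2.1).resolve_left hc, h1.2.2⟩, hx⟩
  by_cases hwv : w = v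
  · subst hwv
    cases hw.swap with
    | single h => exact hnoout w h
    | tail h1 h2 => exact hnoout _ h2
  · exact hI.2 w (claim w w hw hwv).1

theorem main : ∀ n s t, s + t ≤ n → 1 ≤ s → 1 ≤ t → ∀ G : Digr,
    Nat.choose (s + t - 2) (s - 1) * 2 ^ (t - 1) ≤ G.verts.card →
    (∃ C : Finset ℕ, G.IsClique C ∧ s ≤ C.card) ∨
    (∃ I : Finset ℕ, G.IsAcyclicSet I ∧ t ≤ I.card) := by
  intro n
  induction n with
  | zero => intro s t hn hs ht; omega
  | succ n ih =>
    intro s t hn hs ht G hcard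
    classical
    have hwpos : 0 < G.verts.card :=
      lt_of_lt_of_le (Nat.mul_pos (Nat.choose_pos (by omega))
        (pow_pos (by norm_num : (0:ℕ) < 2) _)) hcard
    obtain ⟨v, hv⟩ := Finset.card_pos.mp hwpos
    by_cases hs1 : s = 1
    · exact Or.inl ⟨{v}, clique_singleton hv, by simp [hs1]⟩
    by_cases ht1 : t = 1
    · exact Or.inr ⟨{v}, acyclic_singleton hv, by simp [ht1]⟩
    obtain ⟨a, rfl⟩ : ∃ a, s = a + 2 := ⟨s - 2, by omega⟩
    obtain ⟨b, rfl⟩ : ∃ b, t = b + 2 := ⟨t - 2, by omega⟩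
    have e0 : a + 2 + (b + 2) - 2 = a + b + 2 := by omega
    rw [e0, show a + 2 - 1 = a + 1 from rfl, show b + 2 - 1 = b + 1 from rfl] at hcard
    -- partition the remaining vertices
    set B := (G.verts.erase v).filter (fun u => G.Adj v u ∧ G.Adj u v) with hBdef
    set O := (G.verts.erase v).filter (fun u => G.Adj v u ∧ ¬ G.Adj u v) with hOdef
    set W := (G.verts.erase v).filter (fun u => ¬ G.Adj v u) with hWdef
    have hsplit : B.card + O.card + W.card + 1 = G.verts.card := by
      have h1 : B.card + O.card =
          ((G.verts.erase v).filter (fun u => G.Adj v u)).card := by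
        rw [show B = ((G.verts.erase v).filter (fun u => G.Adj v u)).filter
              (fun u => G.Adj u v) by rw [Finset.filter_filter],
            show O = ((G.verts.erase v).filter (fun u => G.Adj v u)).filter
              (fun u => ¬ G.Adj u v) by rw [Finset.filter_filter]]
        exact Finset.card_filter_add_card_filter_not _
      have h2 : ((G.verts.erase v).filter (fun u => G.Adj v u)).card + W.card =
          (G.verts.erase v).card := Finset.card_filter_add_card_filter_not _
      have h3 : (G.verts.erase v).card = G.verts.card - 1 :=
        Finset.card_erase_of_mem hv
      omega
    have pascal : Nat.choose (a+b+1) a * 2 ^ (b+1)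
        + (Nat.choose (a+b+1) (a+1) * 2 ^ b + Nat.choose (a+b+1) (a+1) * 2 ^ b)
        = Nat.choose (a+b+2) (a+1) * 2 ^ (b+1) := by
      have hps : Nat.choose (a+b+2) (a+1)
          = Nat.choose (a+b+1) a + Nat.choose (a+b+1) (a+1) :=
        Nat.choose_succ_succ' (a+b+1) a
      have key : ∀ c1 c2 p : ℕ, c1 * (p * 2) + (c2 * p + c2 * p) = (c1 + c2) * (p * 2) := by
        intro c1 c2 p; ring
      rw [hps, pow_succ]
      exact key _ _ _
    -- helper facts about membership
    have hBsub : B ⊆ G.verts := (Finset.filter_subset _ _).trans (Finset.erase_subset _ _)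
    have hOsub : O ⊆ G.verts := (Finset.filter_subset _ _).trans (Finset.erase_subset _ _)
    have hWsub : W ⊆ G.verts := (Finset.filter_subset _ _).trans (Finset.erase_subset _ _)
    by_cases hB : Nat.choose (a+b+1) a * 2 ^ (b+1) ≤ B.card
    · -- bidirectional neighbours case: recurse with (s-1, t)
      have hGB : (G.induce B).verts.card = B.card := by
        show (B ∩ G.verts).card = B.card
        rw [Finset.inter_eq_left.mpr hBsub]
      rcases ih (a+1) (b+2) (by omega) (by omega) (by omega) (G.induce B)
          (by
            have e1 : (a+1) + (b+2) - 2 = a + b + 1 := by omega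
            rw [e1, hGB]
            exact hB) with ⟨C, hC, hCcard⟩ | ⟨I, hI, hIcard⟩
      · -- extend clique by v
        have hCB : C ⊆ B := hC.1.trans Finset.inter_subset_left
        have hvC : v ∉ C := fun h =>
          Finset.notMem_erase v G.verts (Finset.filter_subset _ _ (hCB h))
        have hadj : ∀ u ∈ C, G.Adj v u ∧ G.Adj u v := fun u hu =>
          (Finset.mem_filter.mp (hCB hu)).2
        refine Or.inl ⟨insert v C, insert_clique (clique_of_induce hC) hv hadj, ?_⟩
        rw [Finset.card_insert_of_notMem hvC]
        omega
      · exact Or.inr ⟨I, acyclic_of_induce hI, hIcard⟩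
    by_cases hO : Nat.choose (a+b+1) (a+1) * 2 ^ b ≤ O.card
    · -- out-only neighbours case: recurse with (s, t-1)
      have hGO : (G.induce O).verts.card = O.card := by
        show (O ∩ G.verts).card = O.card
        rw [Finset.inter_eq_left.mpr hOsub]
      rcases ih (a+2) (b+1) (by omega) (by omega) (by omega) (G.induce O)
          (by
            have e1 : (a+2) + (b+1) - 2 = a + b + 1 := by omega
            rw [e1, hGO]
            exact hO) with ⟨C, hC, hCcard⟩ | ⟨I, hI, hIcard⟩
      · exact Or.inl ⟨C, clique_of_induce hC, hCcard⟩
      · have hIO : I ⊆ O := hI.1.trans Finset.inter_subset_left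
        have hvI : v ∉ I := fun h =>
          Finset.notMem_erase v G.verts (Finset.filter_subset _ _ (hIO h))
        have hno : ∀ u ∈ I, ¬ G.Adj u v := fun u hu =>
          (Finset.mem_filter.mp (hIO hu)).2.2
        refine Or.inr ⟨insert v I, insert_acyclic_no_in (acyclic_of_induce hI) hv hno, ?_⟩
        rw [Finset.card_insert_of_notMem hvI]
        omega
    by_cases hW : Nat.choose (a+b+1) (a+1) * 2 ^ b ≤ W.card
    · -- non-out-neighbours case: recurse with (s, t-1)
      have hGW : (G.induce W).verts.card = W.card := by
        show (W ∩ G.verts).card = W.card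
        rw [Finset.inter_eq_left.mpr hWsub]
      rcases ih (a+2) (b+1) (by omega) (by omega) (by omega) (G.induce W)
          (by
            have e1 : (a+2) + (b+1) - 2 = a + b + 1 := by omega
            rw [e1, hGW]
            exact hW) with ⟨C, hC, hCcard⟩ | ⟨I, hI, hIcard⟩
      · exact Or.inl ⟨C, clique_of_induce hC, hCcard⟩
      · have hIW : I ⊆ W := hI.1.trans Finset.inter_subset_left
        have hvI : v ∉ I := fun h =>
          Finset.notMem_erase v G.verts (Finset.filter_subset _ _ (hIW h))
        have hno : ∀ u ∈ I, ¬ G.Adj v u := fun u hu =>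
          (Finset.mem_filter.mp (hIW hu)).2
        refine Or.inr ⟨insert v I, insert_acyclic_no_out (acyclic_of_induce hI) hv hno, ?_⟩
        rw [Finset.card_insert_of_notMem hvI]
        omega
    exfalso
    omega

end DigrAux

/-- For all `s,t ≥ 1`, every digraph on at least
`C(s+t-2, s-1) · 2^(t-1)` vertices contains a clique of size at least `s` or
an acyclic set of size at least `t`. -/
theorem stmt3 (s t : ℕ) (hs : 1 ≤ s) (ht : 1 ≤ t) (G : Digr)
    (hn : Nat.choose (s + t - 2) (s - 1) * 2 ^ (t - 1) ≤ G.verts.card) :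
    (∃ C : Finset ℕ, G.IsClique C ∧ s ≤ C.card) ∨
    (∃ I : Finset ℕ, G.IsAcyclicSet I ∧ t ≤ I.card) :=
  DigrAux.main (s + t) s t le_rfl hs ht G hn
end

section
/- Every digraph G on n ≥ 1 vertices satisfies ω(G) · MAIS(G) > ⌊(log₂ n)/3⌋; that is, G has a clique C and an acyclic set I with |C| · |I| > ⌊(log₂ n)/3⌋. -/
lemma no_cycle_insert {α : Type*} (R S : α → α → Prop) (v : α)
    (hv : ∀ a, ¬ S a v) (hsub : ∀ a b, S a b → a ≠ v → b ≠ v → R a b)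
    (hR : ∀ x, ¬ Relation.TransGen R x x) : ∀ x, ¬ Relation.TransGen S x x := by
  have claim1 : ∀ x y, Relation.TransGen S x y → y ≠ v := by
    intro x y h
    induction h with
    | single h => exact fun hy => hv _ (hy ▸ h)
    | tail _ h _ => exact fun hy => hv _ (hy ▸ h)
  have claim2 : ∀ x y, Relation.TransGen S x y → x ≠ v → Relation.TransGen R x y := by
    intro x y h
    induction h with
    | @single b h =>
      exact fun hx => Relation.TransGen.single
        (hsub _ _ h hx (claim1 _ _ (Relation.TransGen.single h)))
    | @tail b c h1 h2 ih =>
      exact fun hx => Relation.TransGen.tail (ih hx)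
        (hsub _ _ h2 (claim1 _ _ h1) (claim1 _ _ (Relation.TransGen.tail h1 h2)))
  intro x hx
  exact hR x (claim2 x x hx (claim1 x x hx))

namespace Digr

lemma clique_of_induce {G : Digr} {S C : Finset ℕ} (h : (G.induce S).IsClique C) :
    G.IsClique C := by
  refine ⟨h.1.trans (Finset.inter_subset_right), fun u hu w hw huw => ?_⟩
  obtain ⟨h1, h2⟩ := h.2 u hu w hw huw
  exact ⟨h1.2.2, h2.2.2⟩

lemma acyclic_of_induce {G : Digr} {S I : Finset ℕ} (h : (G.induce S).IsAcyclicSet I) :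
    G.IsAcyclicSet I := by
  have hsub : I ⊆ S ∩ G.verts := h.1
  refine ⟨hsub.trans (Finset.inter_subset_right), fun v hv => h.2 v ?_⟩
  refine Relation.TransGen.mono ?_ v v hv
  intro a b ⟨ha, hb, hab⟩
  exact ⟨ha, hb, (Finset.mem_inter.mp (hsub ha)).1, (Finset.mem_inter.mp (hsub hb)).1, hab⟩

lemma acyclic_insert {G : Digr} {I : Finset ℕ} {v : ℕ} (hv : v ∈ G.verts) (hvI : v ∉ I)
    (h : (∀ a ∈ I, ¬ G.Adj a v) ∨ (∀ a ∈ I, ¬ G.Adj v a)) (hA : G.IsAcyclicSet I) :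
    G.IsAcyclicSet (insert v I) := by
  refine ⟨Finset.insert_subset hv hA.1, ?_⟩
  set R := fun a b => a ∈ I ∧ b ∈ I ∧ G.Adj a b with hRdef
  set S := fun a b => a ∈ insert v I ∧ b ∈ insert v I ∧ G.Adj a b with hSdef
  rcases h with h | h
  · -- no in-edges into v
    refine no_cycle_insert R S v ?_ ?_ hA.2
    · rintro a ⟨ha, _, hadj⟩
      rcases Finset.mem_insert.mp ha with rfl | ha'
      · exact G.loopless _ hadj
      · exact h a ha' hadj
    · rintro a b ⟨ha, hb, hadj⟩ hav hbv
      exact ⟨(Finset.mem_insert.mp ha).resolve_left hav,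
        (Finset.mem_insert.mp hb).resolve_left hbv, hadj⟩
  · -- no out-edges from v; use swapped relations
    intro x hx
    have hx' : Relation.TransGen (Function.swap S) x x := (Relation.transGen_swap).mpr hx
    refine no_cycle_insert (Function.swap R) (Function.swap S) v ?_ ?_ ?_ x hx'
    · rintro a ⟨_, ha, hadj⟩
      rcases Finset.mem_insert.mp ha with rfl | ha'
      · exact G.loopless _ hadj
      · exact h a ha' hadj
    · rintro a b ⟨hb, ha, hadj⟩ hav hbv
      exact ⟨(Finset.mem_insert.mp hb).resolve_left hbv,
        (Finset.mem_insert.mp ha).resolve_left hav, hadj⟩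
    · intro y hy
      exact hA.2 y ((Relation.transGen_swap).mp hy)

lemma key : ∀ m, ∀ G : Digr, G.verts.card = m → 1 ≤ m →
    ∃ C I : Finset ℕ, G.IsClique C ∧ G.IsAcyclicSet I ∧ 1 ≤ C.card ∧ 1 ≤ I.card ∧
      Nat.log 4 m + 2 ≤ C.card + I.card := by
  intro m
  induction m using Nat.strong_induction_on with
  | _ m IH =>
  intro G hm h1
  classical
  obtain ⟨v, hv⟩ := Finset.card_pos.mp (hm ▸ h1)
  by_cases hm4 : m < 4
  · -- base case: take the singleton {v} for both
    refine ⟨{v}, {v}, ⟨by simpa using hv, ?_⟩, ⟨by simpa using hv, ?_⟩, by simp, by simp, ?_⟩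
    · intro u hu w hw huw
      simp only [Finset.mem_singleton] at hu hw
      exact absurd (hu.trans hw.symm) huw
    · intro x hx
      cases hx with
      | single h =>
        obtain ⟨hb, -, hadj⟩ := h
        rw [Finset.mem_singleton] at hb
        rw [hb] at hadj
        exact G.loopless v hadj
      | tail _ h =>
        obtain ⟨hb, hx', hadj⟩ := h
        rw [Finset.mem_singleton] at hb hx'
        rw [hb, hx'] at hadj
        exact G.loopless v hadj
    · have : Nat.log 4 m = 0 := Nat.log_eq_zero_iff.mpr (Or.inl hm4)
      simp [this]
  · push_neg at hm4
    set T := G.verts.erase v with hT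
    have hTcard : T.card = m - 1 := by rw [hT, Finset.card_erase_of_mem hv, hm]
    set B := T.filter (fun u => G.Adj v u ∧ G.Adj u v) with hB
    set O := T.filter (fun u => G.Adj v u ∧ ¬ G.Adj u v) with hO
    set P := T.filter (fun u => ¬ G.Adj v u ∧ G.Adj u v) with hP
    set N := T.filter (fun u => ¬ G.Adj v u ∧ ¬ G.Adj u v) with hN
    have e1 : (T.filter (fun u => G.Adj v u)).card
        + (T.filter (fun u => ¬ G.Adj v u)).card = T.card :=
      Finset.card_filter_add_card_filter_not _
    have e2 : B.card + O.card = (T.filter (fun u => G.Adj v u)).card := by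
      rw [hB, hO, ← Finset.filter_filter, ← Finset.filter_filter]
      exact Finset.card_filter_add_card_filter_not _
    have e3 : P.card + N.card = (T.filter (fun u => ¬ G.Adj v u)).card := by
      rw [hP, hN, ← Finset.filter_filter, ← Finset.filter_filter]
      exact Finset.card_filter_add_card_filter_not _
    -- one of the four classes has at least ⌊m/4⌋ elements
    have hmax : m / 4 ≤ B.card ∨ m / 4 ≤ O.card ∨ m / 4 ≤ P.card ∨ m / 4 ≤ N.card := by
      omega
    -- the common inductive step
    have main : ∀ S : Finset ℕ, S ⊆ T → m / 4 ≤ S.card →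
        ∃ C I : Finset ℕ, G.IsClique C ∧ G.IsAcyclicSet I ∧ 1 ≤ C.card ∧ 1 ≤ I.card ∧
          Nat.log 4 m + 1 ≤ C.card + I.card ∧ C ⊆ S ∧ I ⊆ S := by
      intro S hST hScard
      have hSv : S ⊆ G.verts := hST.trans (Finset.erase_subset _ _)
      have hverts : (G.induce S).verts = S := by
        show S ∩ G.verts = S
        exact Finset.inter_eq_left.mpr hSv
      have hm' : (G.induce S).verts.card = S.card := by rw [hverts]
      have hlt : S.card < m := by
        have := Finset.card_le_card hST
        omega
      have hpos : 1 ≤ S.card := le_trans (by omega) hScard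
      obtain ⟨C, I, hC, hI, hc1, ha1, hsum⟩ := IH S.card hlt (G.induce S) hm' hpos
      have hlog4 : Nat.log 4 m ≤ Nat.log 4 S.card + 1 := by
        have h1' : Nat.log 4 (m / 4) ≤ Nat.log 4 S.card :=
          Nat.log_mono_right hScard
        have h2' : Nat.log 4 (m / 4) = Nat.log 4 m - 1 := Nat.log_div_base 4 m
        have h3' : 0 < Nat.log 4 m := Nat.log_pos (by norm_num) hm4
        omega
      exact ⟨C, I, clique_of_induce hC, acyclic_of_induce hI, hc1, ha1, by omega,
        hverts ▸ hC.1, hverts ▸ hI.1⟩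
    have hvT : v ∉ T := Finset.notMem_erase v _
    rcases hmax with hc | hc | hc | hc
    · -- big both-edges class: grow the clique
      obtain ⟨C, I, hC, hI, hc1, ha1, hsum, hCS, _⟩ :=
        main B (Finset.filter_subset _ _) hc
      have hvC : v ∉ C := fun h => hvT (Finset.filter_subset _ _ (hCS h))
      refine ⟨insert v C, I, ⟨Finset.insert_subset hv hC.1, ?_⟩, hI, ?_, ha1, ?_⟩
      · intro u hu w hw huw
        rcases Finset.mem_insert.mp hu with rfl | hu' <;>
          rcases Finset.mem_insert.mp hw with rfl | hw'
        · exact absurd rfl huw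
        · have := (Finset.mem_filter.mp (hCS hw')).2
          exact ⟨this.1, this.2⟩
        · have := (Finset.mem_filter.mp (hCS hu')).2
          exact ⟨this.2, this.1⟩
        · exact hC.2 u hu' w hw' huw
      · simp [Finset.card_insert_of_notMem hvC]
      · rw [Finset.card_insert_of_notMem hvC]
        omega
    · -- big out-only class: grow the acyclic set
      obtain ⟨C, I, hC, hI, hc1, ha1, hsum, _, hIS⟩ :=
        main O (Finset.filter_subset _ _) hc
      have hvI : v ∉ I := fun h => hvT (Finset.filter_subset _ _ (hIS h))
      refine ⟨C, insert v I, hC, acyclic_insert hv hvI (Or.inl ?_) hI, hc1, ?_, ?_⟩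
      · intro a ha
        exact (Finset.mem_filter.mp (hIS ha)).2.2
      · simp [Finset.card_insert_of_notMem hvI]
      · rw [Finset.card_insert_of_notMem hvI]
        omega
    · -- big in-only class: grow the acyclic set
      obtain ⟨C, I, hC, hI, hc1, ha1, hsum, _, hIS⟩ :=
        main P (Finset.filter_subset _ _) hc
      have hvI : v ∉ I := fun h => hvT (Finset.filter_subset _ _ (hIS h))
      refine ⟨C, insert v I, hC, acyclic_insert hv hvI (Or.inr ?_) hI, hc1, ?_, ?_⟩
      · intro a ha
        exact (Finset.mem_filter.mp (hIS ha)).2.1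
      · simp [Finset.card_insert_of_notMem hvI]
      · rw [Finset.card_insert_of_notMem hvI]
        omega
    · -- big non-adjacent class: grow the acyclic set
      obtain ⟨C, I, hC, hI, hc1, ha1, hsum, _, hIS⟩ :=
        main N (Finset.filter_subset _ _) hc
      have hvI : v ∉ I := fun h => hvT (Finset.filter_subset _ _ (hIS h))
      refine ⟨C, insert v I, hC, acyclic_insert hv hvI (Or.inl ?_) hI, hc1, ?_, ?_⟩
      · intro a ha
        exact (Finset.mem_filter.mp (hIS ha)).2.2
      · simp [Finset.card_insert_of_notMem hvI]
      · rw [Finset.card_insert_of_notMem hvI]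
        omega

end Digr

/-- Every digraph `G` on `n ≥ 1` vertices satisfies
`ω(G) · MAIS(G) > ⌊(log₂ n) / 3⌋`; that is, `G` has a clique `C` and an acyclic
set `I` with `|C| · |I| > ⌊(log₂ n) / 3⌋`. -/
theorem stmt5 (G : Digr) (hn : 1 ≤ G.verts.card) :
    Nat.log 2 G.verts.card / 3 < G.cliqueNum * G.mais ∧
      ∃ (C I : Finset ℕ), G.IsClique C ∧ G.IsAcyclicSet I ∧
        Nat.log 2 G.verts.card / 3 < C.card * I.card := by
  obtain ⟨C, I, hC, hI, hc1, ha1, hsum⟩ := Digr.key G.verts.card G rfl hn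
  set n := G.verts.card with hn'
  have hprod : Nat.log 4 n + 1 ≤ C.card * I.card := by
    have : C.card + I.card ≤ C.card * I.card + 1 := by nlinarith
    omega
  have hlog : Nat.log 2 n / 3 ≤ Nat.log 4 n := by
    set t := Nat.log 2 n with ht
    have h2 : 2 ^ t ≤ n := Nat.pow_log_le_self 2 (by omega)
    have h4 : (4 : ℕ) ^ (t / 2) ≤ n := by
      calc (4 : ℕ) ^ (t / 2) = 2 ^ (2 * (t / 2)) := by
            rw [pow_mul]; norm_num
        _ ≤ 2 ^ t := Nat.pow_le_pow_right (by norm_num) (by omega)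
        _ ≤ n := h2
    have := Nat.le_log_of_pow_le (by norm_num) h4
    omega
  have hCI : Nat.log 2 n / 3 < C.card * I.card := by omega
  refine ⟨?_, C, I, hC, hI, hCI⟩
  have hbddC : BddAbove {k | ∃ C, G.IsClique C ∧ C.card = k} :=
    ⟨G.verts.card, fun k ⟨C, hC, hk⟩ => hk ▸ Finset.card_le_card hC.1⟩
  have hbddI : BddAbove {k | ∃ I, G.IsAcyclicSet I ∧ I.card = k} :=
    ⟨G.verts.card, fun k ⟨I, hI, hk⟩ => hk ▸ Finset.card_le_card hI.1⟩
  have hc : C.card ≤ G.cliqueNum := le_csSup hbddC ⟨C, hC, rfl⟩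
  have ha : I.card ≤ G.mais := le_csSup hbddI ⟨I, hI, rfl⟩
  exact lt_of_lt_of_le hCI (Nat.mul_le_mul hc ha)
end

section
/- Let 𝒢 be a hereditary family of finite digraphs and let c > 0 be a constant such that for all integers s,t ≥ 1, every digraph in 𝒢 on at least c·s·t vertices has a clique of size at least s or an acyclic set of size at least t. Then there exists a constant C > 0 such that every digraph G ∈ 𝒢 on n ≥ 2 vertices satisfies CC(G) ≤ C · (log n) · MAIS(G). -/
namespace DigrAux

open Digr

def ccSet (G : Digr) : Set ℕ :=
  {k | ∃ 𝒞 : Finset (Finset ℕ), 𝒞.card = k ∧ (∀ C ∈ 𝒞, G.IsClique C) ∧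
    ∀ v ∈ G.verts, ∃ C ∈ 𝒞, v ∈ C}

lemma cc_eq (G : Digr) : G.cc = sInf (ccSet G) := rfl

lemma card_mem_ccSet (G : Digr) : G.verts.card ∈ ccSet G := by
  refine ⟨G.verts.image (fun v => {v}), ?_, ?_, ?_⟩
  · exact Finset.card_image_of_injective _ (fun a b h => by simpa using h)
  · intro C hC
    obtain ⟨v, hv, rfl⟩ := Finset.mem_image.mp hC
    refine ⟨Finset.singleton_subset_iff.mpr hv, ?_⟩
    intro u hu w hw huw
    simp only [Finset.mem_singleton] at hu hw
    exact absurd (hu.trans hw.symm) huw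
  · intro v hv
    exact ⟨{v}, Finset.mem_image_of_mem _ hv, Finset.mem_singleton_self v⟩

lemma ccSet_nonempty (G : Digr) : (ccSet G).Nonempty := ⟨_, card_mem_ccSet G⟩

lemma cc_le_card (G : Digr) : G.cc ≤ G.verts.card :=
  Nat.sInf_le (card_mem_ccSet G)

lemma cc_le_step (G : Digr) (C : Finset ℕ) (hC : G.IsClique C) :
    G.cc ≤ (G.induce (G.verts \ C)).cc + 1 := by
  set G' := G.induce (G.verts \ C) with hG'
  obtain ⟨𝒞', hcard, hcl, hcov⟩ := Nat.sInf_mem (ccSet_nonempty G')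
  have hverts' : G'.verts = G.verts \ C := by
    simp [hG', Digr.induce, Finset.inter_eq_left.mpr Finset.sdiff_subset]
  have hmem : (insert C 𝒞').card ∈ ccSet G := by
    refine ⟨insert C 𝒞', rfl, ?_, ?_⟩
    · intro D hD
      rcases Finset.mem_insert.mp hD with rfl | hD
      · exact hC
      · obtain ⟨hsub, hadj⟩ := hcl D hD
        refine ⟨?_, ?_⟩
        · intro x hx
          have := hsub hx
          rw [hverts'] at this
          exact (Finset.mem_sdiff.mp this).1
        · intro u hu w hw huw
          obtain ⟨h1, h2⟩ := hadj u hu w hw huw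
          exact ⟨h1.2.2, h2.2.2⟩
    · intro v hv
      by_cases hvC : v ∈ C
      · exact ⟨C, Finset.mem_insert_self _ _, hvC⟩
      · have : v ∈ G'.verts := by rw [hverts']; exact Finset.mem_sdiff.mpr ⟨hv, hvC⟩
        obtain ⟨D, hD, hvD⟩ := hcov v this
        exact ⟨D, Finset.mem_insert_of_mem hD, hvD⟩
  calc G.cc ≤ (insert C 𝒞').card := Nat.sInf_le hmem
    _ ≤ 𝒞'.card + 1 := Finset.card_insert_le _ _
    _ = G'.cc + 1 := by rw [hcard]; rfl

lemma singleton_acyclic (G : Digr) {v : ℕ} (hv : v ∈ G.verts) :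
    G.IsAcyclicSet {v} := by
  refine ⟨Finset.singleton_subset_iff.mpr hv, ?_⟩
  intro w hw
  have : ∀ a b : ℕ, ¬ (a ∈ ({v} : Finset ℕ) ∧ b ∈ ({v} : Finset ℕ) ∧ G.Adj a b) := by
    rintro a b ⟨ha, hb, hab⟩
    simp only [Finset.mem_singleton] at ha hb
    subst ha; subst hb
    exact G.loopless _ hab
  cases hw with
  | single h => exact this _ _ h
  | tail _ h => exact this _ _ h

lemma arith1 (a m : ℝ) (ha : 0 < a) (hm : 2*a+1 < m) :
    m + (2*a+1) ≤ (2*a+1) * (m/a) := by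
  rw [mul_div_assoc', le_div_iff₀ ha]
  nlinarith [mul_lt_mul_of_pos_right hm (show (0:ℝ) < a+1 by linarith)]

lemma key (𝒢 : Set Digr) (h𝒢 : Digr.Hereditary 𝒢) (c : ℝ) (hc : 0 < c)
    (hRamsey : ∀ s t : ℕ, 1 ≤ s → 1 ≤ t → ∀ G ∈ 𝒢,
      c * (s : ℝ) * (t : ℝ) ≤ (G.verts.card : ℝ) →
      (∃ C : Finset ℕ, G.IsClique C ∧ s ≤ C.card) ∨
      (∃ I : Finset ℕ, G.IsAcyclicSet I ∧ t ≤ I.card))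
    (t : ℕ) (ht : 1 ≤ t) :
    ∀ m : ℕ, ∀ G ∈ 𝒢, G.verts.card = m →
      (∀ I, G.IsAcyclicSet I → I.card ≤ t) →
      (G.cc : ℝ) ≤ (2*c*((t:ℝ)+1)+1) * Real.log m + (2*c*((t:ℝ)+1)+1) := by
  intro m
  induction m using Nat.strong_induction_on with
  | _ m ih =>
  intro G hG hm hmais
  set K : ℝ := 2*c*((t:ℝ)+1)+1 with hKdef
  have htR : (1:ℝ) ≤ (t:ℝ) := by exact_mod_cast ht
  have hK1 : 1 ≤ K := by nlinarith
  have hK0 : 0 < K := by linarith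
  have hlogm : 0 ≤ Real.log m := Real.log_natCast_nonneg m
  have hccm : (G.cc : ℝ) ≤ (m : ℝ) := by
    have := cc_le_card G
    rw [hm] at this
    exact_mod_cast this
  by_cases hsmall : (m:ℝ) ≤ K
  · nlinarith
  push_neg at hsmall
  set a : ℝ := c*((t:ℝ)+1) with hadef
  have ha : 0 < a := by positivity
  have hKa : K = 2*a + 1 := by rw [hKdef, hadef]; ring
  have hm2 : 2 ≤ m := by
    have h1 : (1:ℝ) < (m:ℝ) := lt_of_le_of_lt hK1 hsmall
    have h2 : 1 < m := by exact_mod_cast h1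
    omega
  have hm0 : (0:ℝ) < m := by positivity
  have hma : 2 < (m:ℝ)/a := by
    rw [lt_div_iff₀ ha]
    linarith [hKa, hsmall]
  set s : ℕ := ⌊(m:ℝ)/a⌋₊ with hsdef
  have hs2 : 2 ≤ s := Nat.le_floor (by exact_mod_cast hma.le)
  have hs_le : (s:ℝ) ≤ (m:ℝ)/a := Nat.floor_le (by positivity)
  have hs_ge : (m:ℝ)/a - 1 ≤ (s:ℝ) := (Nat.sub_one_lt_floor _).le
  have hram := hRamsey s (t+1) (by omega) (by omega) G hG (by
    rw [hm]
    push_cast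
    calc c * (s:ℝ) * ((t:ℝ)+1) = a * s := by rw [hadef]; ring
      _ ≤ a * ((m:ℝ)/a) := by nlinarith
      _ = m := by field_simp)
  rcases hram with ⟨C, hCclique, hCs⟩ | ⟨I, hI, hIcard⟩
  swap
  · have := hmais I hI
    omega
  -- clique case
  set G' := G.induce (G.verts \ C) with hG'def
  have hG'mem : G' ∈ 𝒢 := h𝒢 G hG _ Finset.sdiff_subset
  have hverts' : G'.verts = G.verts \ C := by
    simp [hG'def, Digr.induce, Finset.inter_eq_left.mpr Finset.sdiff_subset]
  have hCsub : C ⊆ G.verts := hCclique.1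
  have hCcard_le : C.card ≤ m := by rw [← hm]; exact Finset.card_le_card hCsub
  have hm' : G'.verts.card = m - C.card := by
    rw [hverts', Finset.card_sdiff_of_subset hCsub, hm]
  have hmais' : ∀ I, G'.IsAcyclicSet I → I.card ≤ t := by
    intro I hI
    apply hmais
    have hIsub : I ⊆ G.verts \ C := by rw [← hverts']; exact hI.1
    refine ⟨hIsub.trans Finset.sdiff_subset, ?_⟩
    intro v hv
    refine hI.2 v (Relation.TransGen.mono ?_ v v hv)
    rintro x y ⟨hx, hy, hxy⟩
    exact ⟨hx, hy, hIsub hx, hIsub hy, hxy⟩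
  have hstep : G.cc ≤ G'.cc + 1 := cc_le_step G C hCclique
  have hCc1 : 1 ≤ C.card := le_trans (by omega) hCs
  have hm'lt : m - C.card < m := Nat.sub_lt (by omega) (by omega)
  have hIH := ih (m - C.card) hm'lt G' hG'mem hm' hmais'
  have hstepR : (G.cc : ℝ) ≤ (G'.cc : ℝ) + 1 := by exact_mod_cast hstep
  by_cases hm'0 : m - C.card = 0
  · have hcc0 : (G'.cc : ℝ) ≤ 0 := by
      have := cc_le_card G'
      rw [hm', hm'0] at this
      exact_mod_cast this
    nlinarith
  · have hm'pos : 0 < m - C.card := Nat.pos_of_ne_zero hm'0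
    set M' : ℝ := ((m - C.card : ℕ) : ℝ) with hM'def
    have hm'cast : M' = (m:ℝ) - (C.card:ℝ) := by
      rw [hM'def]; push_cast [Nat.cast_sub hCcard_le]; ring
    have hM' : (0:ℝ) < M' := by rw [hM'def]; exact_mod_cast hm'pos
    clear_value K a s M'
    have hsC : (s:ℝ) ≤ (C.card:ℝ) := by exact_mod_cast hCs
    have hYC : (m:ℝ)/a - 1 ≤ (C.card:ℝ) := le_trans hs_ge hsC
    have key2 : (m:ℝ) + K ≤ K * ((m:ℝ)/a) := by
      rw [hKa]
      exact arith1 a m ha (by rw [← hKa]; exact hsmall)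
    have hKCge : K * ((m:ℝ)/a - 1) ≤ K * (C.card:ℝ) :=
      mul_le_mul_of_nonneg_left hYC hK0.le
    have hKC : (m:ℝ) ≤ K * (C.card:ℝ) := by linarith [hKCge, key2]
    have hKm' : K * M' ≤ K * (m:ℝ) - m := by
      rw [hm'cast]; linarith [hKC]
    have hlog1 : Real.log M' - Real.log (m:ℝ) ≤ M'/(m:ℝ) - 1 := by
      have h := Real.log_le_sub_one_of_pos (show (0:ℝ) < M'/(m:ℝ) by positivity)
      rwa [Real.log_div hM'.ne' hm0.ne'] at h
    have hdiv : K * (M'/(m:ℝ)) ≤ K - 1 := by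
      rw [mul_div_assoc', div_le_iff₀ hm0]
      linarith [hKm']
    have hfin : K * Real.log M' ≤ K * Real.log (m:ℝ) - 1 := by
      linarith [mul_le_mul_of_nonneg_left hlog1 hK0.le, hdiv]
    linarith [hstepR, hIH, hfin]
end DigrAux


open DigrAux

/-- Let 𝒢 be a hereditary family of digraphs and `c > 0` such
that for all `s,t ≥ 1`, every digraph in 𝒢 on at least `c·s·t` vertices has a
clique of size ≥ `s` or an acyclic set of size ≥ `t`. Then there is a constant
`C > 0` such that every `G ∈ 𝒢` on `n ≥ 2` vertices satisfies
`CC(G) ≤ C · (log n) · MAIS(G)`. -/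
theorem stmt7 (𝒢 : Set Digr) (h𝒢 : Digr.Hereditary 𝒢) (c : ℝ) (hc : 0 < c)
    (hRamsey : ∀ s t : ℕ, 1 ≤ s → 1 ≤ t → ∀ G ∈ 𝒢,
      c * (s : ℝ) * (t : ℝ) ≤ (G.verts.card : ℝ) →
      (∃ C : Finset ℕ, G.IsClique C ∧ s ≤ C.card) ∨
      (∃ I : Finset ℕ, G.IsAcyclicSet I ∧ t ≤ I.card)) :
    ∃ C : ℝ, 0 < C ∧ ∀ G ∈ 𝒢, 2 ≤ G.verts.card →
      (G.cc : ℝ) ≤ C * Real.log (G.verts.card : ℝ) * (G.mais : ℝ) := by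
  refine ⟨3*(4*c+1), by positivity, ?_⟩
  intro G hG hn
  have hbdd : BddAbove {k | ∃ I, G.IsAcyclicSet I ∧ I.card = k} := by
    refine ⟨G.verts.card, ?_⟩
    rintro k ⟨I, hI, rfl⟩
    exact Finset.card_le_card hI.1
  obtain ⟨v, hv⟩ := Finset.card_pos.mp (by omega : 0 < G.verts.card)
  have ht1 : 1 ≤ G.mais :=
    le_csSup hbdd ⟨{v}, singleton_acyclic G hv, Finset.card_singleton v⟩
  have hmaisle : ∀ I, G.IsAcyclicSet I → I.card ≤ G.mais :=
    fun I hI => le_csSup hbdd ⟨I, hI, rfl⟩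
  have hkey := key 𝒢 h𝒢 c hc hRamsey G.mais ht1 G.verts.card G hG rfl hmaisle
  have hTR' : (1:ℝ) ≤ (G.mais : ℝ) := by exact_mod_cast ht1
  set T : ℝ := (G.mais : ℝ) with hT
  set L : ℝ := Real.log (G.verts.card : ℝ) with hL
  have hTR : (1:ℝ) ≤ T := hTR'
  have hL2 : (1/2 : ℝ) < L := by
    have h2n : (2:ℝ) ≤ (G.verts.card : ℝ) := by exact_mod_cast hn
    have := Real.log_le_log (by norm_num) h2n
    have hlog2 : (0.6931471803 : ℝ) < Real.log 2 := Real.log_two_gt_d9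
    linarith
  nlinarith [hkey, mul_pos hc (mul_pos (by linarith : (0:ℝ) < T) (by linarith : (0:ℝ) < L)),
    mul_nonneg (mul_nonneg hc.le (by linarith : (0:ℝ) ≤ T - 1)) (by linarith : (0:ℝ) ≤ L),
    mul_nonneg (mul_nonneg hc.le (by linarith : (0:ℝ) ≤ T)) (by linarith : (0:ℝ) ≤ L - 1/2),
    mul_nonneg (by linarith : (0:ℝ) ≤ T - 1) (by linarith : (0:ℝ) ≤ L),
    mul_nonneg (by linarith : (0:ℝ) ≤ T) (by linarith : (0:ℝ) ≤ L - 1/2)]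
end

section
/- Let 𝒢 be a hereditary family of finite simple graphs and let Q : ℕ × ℕ → ℕ be a function such that for all integers s,t ≥ 1, every graph in 𝒢 on at least Q(s,t) vertices has a clique of size at least s or an independent set of size at least t. Define f_Q(n) = min{ s·t : s,t ≥ 1 and Q(s+1,t+1) > n }. Then every graph G ∈ 𝒢 on n vertices satisfies χ̄(G) ≤ (∑_{i=1}^{n} 1/f_Q(i)) · α(G). -/
/-- A finite simple graph: a finite vertex set (a finset of naturals) together
with a symmetric irreflexive adjacency relation. -/
structure FGraph where
  verts : Finset ℕ
  Adj : ℕ → ℕ → Prop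
  symm : ∀ u v, Adj u v → Adj v u
  loopless : ∀ v, ¬ Adj v v

namespace FGraph

/-- A clique: a set of pairwise adjacent vertices. -/
def IsClique (G : FGraph) (C : Finset ℕ) : Prop :=
  C ⊆ G.verts ∧ ∀ u ∈ C, ∀ v ∈ C, u ≠ v → G.Adj u v

/-- An independent set: a set of pairwise non-adjacent vertices. -/
def IsIndep (G : FGraph) (I : Finset ℕ) : Prop :=
  I ⊆ G.verts ∧ ∀ u ∈ I, ∀ v ∈ I, u ≠ v → ¬ G.Adj u v

/-- α: the independence number. -/
noncomputable def indepNum (G : FGraph) : ℕ :=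
  sSup {k | ∃ I, G.IsIndep I ∧ I.card = k}

/-- χ̄: the clique cover number, i.e. the minimum number of cliques whose union
is the vertex set. -/
noncomputable def ccNum (G : FGraph) : ℕ :=
  sInf {k | ∃ 𝒞 : Finset (Finset ℕ), 𝒞.card = k ∧ (∀ C ∈ 𝒞, G.IsClique C) ∧
    ∀ v ∈ G.verts, ∃ C ∈ 𝒞, v ∈ C}

/-- The subgraph induced by a set of vertices. -/
def induce (G : FGraph) (S : Finset ℕ) : FGraph where
  verts := S ∩ G.verts
  Adj := fun a b => a ∈ S ∧ b ∈ S ∧ G.Adj a b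
  symm := fun u v h => ⟨h.2.1, h.1, G.symm u v h.2.2⟩
  loopless := fun v h => G.loopless v h.2.2

/-- A family of graphs is hereditary if it is closed under taking induced
subgraphs. -/
def Hereditary (𝒢 : Set FGraph) : Prop :=
  ∀ G ∈ 𝒢, ∀ S ⊆ G.verts, G.induce S ∈ 𝒢

end FGraph

/-- The function `f_Q(n) = min { s·t : s,t ≥ 1 and Q(s+1,t+1) > n }`. -/
noncomputable def fQ (Q : ℕ → ℕ → ℕ) (n : ℕ) : ℕ :=
  sInf {k | ∃ s t : ℕ, 1 ≤ s ∧ 1 ≤ t ∧ n < Q (s + 1) (t + 1) ∧ k = s * t}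

-- auxiliary lemmas to be inserted
namespace FGraph

lemma indepNum_bdd (G : FGraph) : BddAbove {k | ∃ I, G.IsIndep I ∧ I.card = k} := by
  refine ⟨G.verts.card, ?_⟩
  rintro k ⟨I, hI, rfl⟩
  exact Finset.card_le_card hI.1

lemma le_indepNum {G : FGraph} {I : Finset ℕ} (h : G.IsIndep I) : I.card ≤ G.indepNum :=
  le_csSup G.indepNum_bdd ⟨I, h, rfl⟩

lemma indepNum_le {G : FGraph} {m : ℕ} (h : ∀ I, G.IsIndep I → I.card ≤ m) :
    G.indepNum ≤ m := by
  refine csSup_le ⟨0, ∅, ⟨Finset.empty_subset _, by simp⟩, by simp⟩ ?_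
  rintro k ⟨I, hI, rfl⟩
  exact h I hI

lemma isIndep_of_induce {G : FGraph} {S I : Finset ℕ} (h : (G.induce S).IsIndep I) :
    G.IsIndep I := by
  obtain ⟨hsub, hadj⟩ := h
  refine ⟨hsub.trans Finset.inter_subset_right, fun u hu v hv hne hA => ?_⟩
  exact hadj u hu v hv hne
    ⟨(Finset.mem_inter.mp (hsub hu)).1, (Finset.mem_inter.mp (hsub hv)).1, hA⟩

lemma isClique_of_induce {G : FGraph} {S C : Finset ℕ} (h : (G.induce S).IsClique C) :
    G.IsClique C :=
  ⟨h.1.trans Finset.inter_subset_right, fun u hu v hv hne => (h.2 u hu v hv hne).2.2⟩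

lemma singleton_isIndep {G : FGraph} {v : ℕ} (hv : v ∈ G.verts) : G.IsIndep {v} := by
  refine ⟨by simpa using hv, ?_⟩
  intro u hu w hw hne
  simp only [Finset.mem_singleton] at hu hw
  omega

lemma singleton_isClique {G : FGraph} {v : ℕ} (hv : v ∈ G.verts) : G.IsClique {v} := by
  refine ⟨by simpa using hv, ?_⟩
  intro u hu w hw hne
  simp only [Finset.mem_singleton] at hu hw
  omega

lemma ccNum_set_nonempty (G : FGraph) :
    {k | ∃ 𝒞 : Finset (Finset ℕ), 𝒞.card = k ∧ (∀ C ∈ 𝒞, G.IsClique C) ∧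
      ∀ v ∈ G.verts, ∃ C ∈ 𝒞, v ∈ C}.Nonempty := by
  refine ⟨_, G.verts.image (fun v => {v}), rfl, ?_, ?_⟩
  · intro C hC
    obtain ⟨v, hv, rfl⟩ := Finset.mem_image.mp hC
    exact singleton_isClique hv
  · intro v hv
    exact ⟨{v}, Finset.mem_image_of_mem _ hv, Finset.mem_singleton_self v⟩

lemma ccNum_spec (G : FGraph) : ∃ 𝒞 : Finset (Finset ℕ), 𝒞.card = G.ccNum ∧
    (∀ C ∈ 𝒞, G.IsClique C) ∧ ∀ v ∈ G.verts, ∃ C ∈ 𝒞, v ∈ C :=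
  Nat.sInf_mem G.ccNum_set_nonempty

lemma ccNum_le {G : FGraph} {𝒞 : Finset (Finset ℕ)} (h1 : ∀ C ∈ 𝒞, G.IsClique C)
    (h2 : ∀ v ∈ G.verts, ∃ C ∈ 𝒞, v ∈ C) : G.ccNum ≤ 𝒞.card :=
  Nat.sInf_le ⟨𝒞, rfl, h1, h2⟩

end FGraph

/-- Let 𝒢 be a hereditary family of graphs and `Q` such that
for all `s,t ≥ 1`, every graph in 𝒢 on at least `Q s t` vertices has a clique of
size ≥ `s` or an independent set of size ≥ `t`. Then every `G ∈ 𝒢` on `n`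
vertices satisfies `χ̄(G) ≤ (∑ i in [1..n], 1 / f_Q i) * α(G)`. -/
theorem stmt9 (𝒢 : Set FGraph) (h𝒢 : FGraph.Hereditary 𝒢) (Q : ℕ → ℕ → ℕ)
    (hQ : ∀ s t : ℕ, 1 ≤ s → 1 ≤ t → ∀ G ∈ 𝒢, Q s t ≤ G.verts.card →
      (∃ C : Finset ℕ, G.IsClique C ∧ s ≤ C.card) ∨
      (∃ I : Finset ℕ, G.IsIndep I ∧ t ≤ I.card)) :
    ∀ G ∈ 𝒢, (G.ccNum : ℝ) ≤
      (∑ i ∈ Finset.Icc 1 G.verts.card, 1 / (fQ Q i : ℝ)) * (G.indepNum : ℝ) := by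
  suffices H : ∀ n : ℕ, ∀ G ∈ 𝒢, G.verts.card = n →
      (G.ccNum : ℝ) ≤ (∑ i ∈ Finset.Icc 1 G.verts.card, 1 / (fQ Q i : ℝ)) * (G.indepNum : ℝ) by
    intro G hG
    exact H _ G hG rfl
  intro n
  induction n using Nat.strong_induction_on with
  | _ n IH =>
    intro G hG hn
    rcases Nat.eq_zero_or_pos n with h0 | hpos
    · subst h0
      have hv : G.verts = ∅ := Finset.card_eq_zero.mp hn
      have hcc : G.ccNum = 0 := by
        have h := G.ccNum_le (𝒞 := ∅) (by simp) (by simp [hv])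
        simpa using h
      rw [hcc]
      have : (0:ℝ) ≤ (∑ i ∈ Finset.Icc 1 G.verts.card, 1 / (fQ Q i : ℝ)) * (G.indepNum : ℝ) := by
        positivity
      simpa using this
    · -- main case
      have hα1 : 1 ≤ G.indepNum := by
        obtain ⟨v, hv⟩ := Finset.card_pos.mp (hn ▸ hpos)
        simpa using FGraph.le_indepNum (FGraph.singleton_isIndep hv)
      set a := G.indepNum with ha
      have hαn : ∀ I : Finset ℕ, G.IsIndep I → ¬ (a + 1 ≤ I.card) := by
        intro I hI h
        have := FGraph.le_indepNum hI
        omega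
      have hfind : ∃ s, 1 ≤ s ∧ n < Q (s+1) (a+1) := by
        refine ⟨n, hpos, ?_⟩
        by_contra h
        push_neg at h
        rcases hQ (n+1) (a+1) (by omega) (by omega) G hG (by omega) with
          ⟨C, hC, hc⟩ | ⟨I, hI, hi⟩
        · have := Finset.card_le_card hC.1
          omega
        · exact hαn I hI hi
      classical
      set s := Nat.find hfind with hsdef
      obtain ⟨hs1, hs2⟩ : 1 ≤ s ∧ n < Q (s+1) (a+1) := Nat.find_spec hfind
      have hclique : ∃ C, G.IsClique C ∧ s ≤ C.card := by
        rcases Nat.lt_or_ge s 2 with h2 | h2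
        · obtain ⟨v, hv⟩ := Finset.card_pos.mp (hn ▸ hpos)
          refine ⟨{v}, FGraph.singleton_isClique hv, ?_⟩
          simpa using (by omega : s ≤ 1)
        · have hmin : ¬ (1 ≤ s - 1 ∧ n < Q (s - 1 + 1) (a+1)) :=
            Nat.find_min hfind (by omega)
          have e : s - 1 + 1 = s := by omega
          rw [e] at hmin
          push_neg at hmin
          have hle : Q s (a+1) ≤ G.verts.card := by
            have := hmin (by omega)
            omega
          rcases hQ s (a+1) (by omega) (by omega) G hG hle with h | ⟨I, hI, hi⟩
          · exact h
          · exact absurd hi (hαn I hI)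
      obtain ⟨C, hC, hsc⟩ := hclique
      have hCsub : C ⊆ G.verts := hC.1
      set c := C.card with hc
      have hc1 : 1 ≤ c := le_trans hs1 hsc
      have hcn : c ≤ n := hn ▸ Finset.card_le_card hCsub
      set S : Finset ℕ := G.verts \ C with hSdef
      have hSsub : S ⊆ G.verts := Finset.sdiff_subset
      set G' := G.induce S with hG'def
      have hG'mem : G' ∈ 𝒢 := h𝒢 G hG S hSsub
      have hG'verts : G'.verts = S := by
        show S ∩ G.verts = S
        exact Finset.inter_eq_left.mpr hSsub
      have hm : G'.verts.card = n - c := by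
        rw [hG'verts, hSdef, Finset.card_sdiff_of_subset hCsub, hn]
      obtain ⟨𝒞', h𝒞'card, h𝒞'cl, h𝒞'cov⟩ := G'.ccNum_spec
      have hccle : G.ccNum ≤ G'.ccNum + 1 := by
        have h1 : ∀ D ∈ insert C 𝒞', G.IsClique D := by
          intro D hD
          rcases Finset.mem_insert.mp hD with rfl | hD
          · exact hC
          · exact FGraph.isClique_of_induce (h𝒞'cl D hD)
        have h2 : ∀ v ∈ G.verts, ∃ D ∈ insert C 𝒞', v ∈ D := by
          intro v hv
          by_cases hvC : v ∈ C
          · exact ⟨C, Finset.mem_insert_self _ _, hvC⟩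
          · obtain ⟨D, hD, hvD⟩ := h𝒞'cov v (by
              rw [hG'verts, hSdef]
              exact Finset.mem_sdiff.mpr ⟨hv, hvC⟩)
            exact ⟨D, Finset.mem_insert_of_mem hD, hvD⟩
        calc G.ccNum ≤ (insert C 𝒞').card := G.ccNum_le h1 h2
          _ ≤ 𝒞'.card + 1 := Finset.card_insert_le _ _
          _ = G'.ccNum + 1 := by rw [h𝒞'card]
      have hIH := IH (n - c) (by omega) G' hG'mem hm
      rw [hm] at hIH
      have hαle : G'.indepNum ≤ a :=
        FGraph.indepNum_le fun I hI => FGraph.le_indepNum (FGraph.isIndep_of_induce hI)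
      -- fQ bounds
      have hfQub : ∀ i, i ≤ n → fQ Q i ≤ s * a := by
        intro i hi
        exact Nat.sInf_le ⟨s, a, hs1, hα1, lt_of_le_of_lt hi hs2, rfl⟩
      have hfQpos : ∀ i, i ≤ n → 1 ≤ fQ Q i := by
        intro i hi
        have hne : {k | ∃ s' t' : ℕ, 1 ≤ s' ∧ 1 ≤ t' ∧ i < Q (s' + 1) (t' + 1) ∧ k = s' * t'}.Nonempty :=
          ⟨s * a, s, a, hs1, hα1, lt_of_le_of_lt hi hs2, rfl⟩
        obtain ⟨s', t', hs', ht', _, hk⟩ := Nat.sInf_mem hne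
        show 1 ≤ sInf {k | ∃ s' t' : ℕ, 1 ≤ s' ∧ 1 ≤ t' ∧ i < Q (s' + 1) (t' + 1) ∧ k = s' * t'}
        rw [hk]
        exact Nat.one_le_iff_ne_zero.mpr (by positivity)
      have hsum_nonneg : ∀ k : ℕ, (0:ℝ) ≤ ∑ i ∈ Finset.Icc 1 k, 1 / (fQ Q i : ℝ) := by
        intro k
        positivity
      have hsplit : ∑ i ∈ Finset.Icc 1 n, 1/(fQ Q i:ℝ) =
          (∑ i ∈ Finset.Icc 1 (n-c), 1/(fQ Q i:ℝ)) + ∑ i ∈ Finset.Ioc (n-c) n, 1/(fQ Q i:ℝ) := by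
        rw [show Finset.Icc 1 n = Finset.Ioc 0 n from Finset.Icc_add_one_left_eq_Ioc 0 n,
            show Finset.Icc 1 (n-c) = Finset.Ioc 0 (n-c) from Finset.Icc_add_one_left_eq_Ioc 0 (n-c)]
        exact (Finset.sum_Ioc_consecutive _ (Nat.zero_le _) (by omega)).symm
      have htail : (c : ℝ) * (1 / ((s:ℝ) * (a:ℝ))) ≤ ∑ i ∈ Finset.Ioc (n-c) n, 1/(fQ Q i:ℝ) := by
        have hcard : (Finset.Ioc (n-c) n).card = c := by
          rw [Nat.card_Ioc]
          omega
        have hterm : ∀ i ∈ Finset.Ioc (n-c) n, 1 / ((s:ℝ) * (a:ℝ)) ≤ 1/(fQ Q i:ℝ) := by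
          intro i hi
          have hin : i ≤ n := (Finset.mem_Ioc.mp hi).2
          have h1 : (1:ℝ) ≤ (fQ Q i : ℝ) := by exact_mod_cast hfQpos i hin
          have h2 : (fQ Q i : ℝ) ≤ (s:ℝ) * (a:ℝ) := by exact_mod_cast hfQub i hin
          exact one_div_le_one_div_of_le (by linarith) h2
        have := Finset.card_nsmul_le_sum (Finset.Ioc (n-c) n)
          (fun i => 1/(fQ Q i:ℝ)) (1/((s:ℝ)*(a:ℝ))) hterm
        rw [hcard] at this
        simpa [nsmul_eq_mul] using this
      have haR : (0:ℝ) < (a:ℝ) := by exact_mod_cast hα1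
      have hsR : (0:ℝ) < (s:ℝ) := by exact_mod_cast hs1
      have hcs : (s:ℝ) ≤ (c:ℝ) := by exact_mod_cast hsc
      have key : (1:ℝ) ≤ (∑ i ∈ Finset.Ioc (n-c) n, 1/(fQ Q i:ℝ)) * (a:ℝ) := by
        calc (1:ℝ) ≤ (c:ℝ)/(s:ℝ) := (one_le_div hsR).mpr hcs
          _ = (c:ℝ) * (1/((s:ℝ)*(a:ℝ))) * (a:ℝ) := by
              field_simp
          _ ≤ _ := mul_le_mul_of_nonneg_right htail haR.le
      have hG'le : (G'.ccNum : ℝ) ≤ (∑ i ∈ Finset.Icc 1 (n-c), 1/(fQ Q i:ℝ)) * (a:ℝ) := by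
        refine hIH.trans ?_
        exact mul_le_mul_of_nonneg_left (by exact_mod_cast hαle) (hsum_nonneg _)
      rw [hn]
      calc (G.ccNum : ℝ) ≤ (G'.ccNum : ℝ) + 1 := by exact_mod_cast hccle
        _ ≤ (∑ i ∈ Finset.Icc 1 (n-c), 1/(fQ Q i:ℝ)) * (a:ℝ)
            + (∑ i ∈ Finset.Ioc (n-c) n, 1/(fQ Q i:ℝ)) * (a:ℝ) := by linarith
        _ = (∑ i ∈ Finset.Icc 1 n, 1/(fQ Q i:ℝ)) * (a:ℝ) := by
            rw [hsplit]
            ring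
end

section
/- There exists a constant c > 0 such that every finite simple graph G on n ≥ 2 vertices satisfies χ̄(G) ≤ c · (n / (log n)²) · α(G). -/
set_option maxHeartbeats 1600000

/-- α: the independence number of a finite simple graph, i.e. the maximum size
of a set of pairwise non-adjacent vertices. -/
noncomputable def indepNum {V : Type} [Fintype V] (G : SimpleGraph V) : ℕ :=
  sSup {k | ∃ I : Finset V, (∀ u ∈ I, ∀ v ∈ I, u ≠ v → ¬ G.Adj u v) ∧ I.card = k}

/-- χ̄: the clique cover number of a finite simple graph, i.e. the minimum
number of cliques whose union is the vertex set. -/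
noncomputable def cliqueCoverNum {V : Type} [Fintype V] (G : SimpleGraph V) : ℕ :=
  sInf {k | ∃ 𝒞 : Finset (Finset V), 𝒞.card = k ∧
    (∀ C ∈ 𝒞, G.IsClique (C : Set V)) ∧ ∀ v : V, ∃ C ∈ 𝒞, v ∈ C}

open Finset in
/-- Finite Ramsey theorem with the Erdős–Szekeres binomial bound. -/
lemma ramseyAux {V : Type} [DecidableEq V] (G : SimpleGraph V) [DecidableRel G.Adj] :
    ∀ n s t (W : Finset V), s + t ≤ n → (s + t).choose s ≤ W.card →
      (∃ C ⊆ W, G.IsClique (C : Set V) ∧ C.card = s + 1) ∨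
      (∃ I ⊆ W, (∀ u ∈ I, ∀ v ∈ I, u ≠ v → ¬ G.Adj u v) ∧ I.card = t + 1) := by
  intro n
  induction n with
  | zero =>
    intro s t W hn hW
    obtain ⟨v, hv⟩ := Finset.card_pos.mp
      (lt_of_lt_of_le (Nat.choose_pos (Nat.le_add_right s t)) hW)
    obtain rfl : s = 0 := by omega
    exact Or.inl ⟨{v}, Finset.singleton_subset_iff.2 hv, by simp, by simp⟩
  | succ n ih =>
    intro s t W hn hW
    obtain ⟨v, hv⟩ := Finset.card_pos.mp
      (lt_of_lt_of_le (Nat.choose_pos (Nat.le_add_right s t)) hW)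
    cases s with
    | zero =>
      exact Or.inl ⟨{v}, Finset.singleton_subset_iff.2 hv, by simp, by simp⟩
    | succ s =>
      cases t with
      | zero =>
        refine Or.inr ⟨{v}, Finset.singleton_subset_iff.2 hv, ?_, by simp⟩
        intro u hu w hw hne
        simp only [Finset.mem_singleton] at hu hw
        exact absurd (hu.trans hw.symm) hne
      | succ t =>
        have hch : (s + 1 + (t + 1)).choose (s + 1)
            = (s + (t + 1)).choose s + (s + 1 + t).choose (s + 1) := by
          have h1 : s + 1 + (t + 1) = (s + 1 + t) + 1 := by omega
          have h2 : s + (t + 1) = s + 1 + t := by omega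
          rw [h1, h2, Nat.choose_succ_succ]
        set N := (W.erase v).filter (fun u => G.Adj v u) with hNdef
        set M := (W.erase v).filter (fun u => ¬ G.Adj v u) with hMdef
        have hNW : N ⊆ W := (Finset.filter_subset _ _).trans (Finset.erase_subset _ _)
        have hMW : M ⊆ W := (Finset.filter_subset _ _).trans (Finset.erase_subset _ _)
        have hcard : W.card - 1 ≤ N.card + M.card := by
          have hsub : W.erase v ⊆ N ∪ M := by
            intro u hu
            by_cases h : G.Adj v u
            · exact Finset.mem_union_left _ (Finset.mem_filter.2 ⟨hu, h⟩)
            · exact Finset.mem_union_right _ (Finset.mem_filter.2 ⟨hu, h⟩)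
          calc W.card - 1 = (W.erase v).card := (Finset.card_erase_of_mem hv).symm
            _ ≤ (N ∪ M).card := Finset.card_le_card hsub
            _ ≤ N.card + M.card := Finset.card_union_le _ _
        rw [hch] at hW
        rcases le_or_gt ((s + (t + 1)).choose s) N.card with hNc | hNc
        · rcases ih s (t + 1) N (by omega) hNc with ⟨C, hCN, hCcl, hCca⟩ | ⟨I, hIN, hIind, hIca⟩
          · left
            have hvC : v ∉ C := fun h =>
              (Finset.mem_erase.1 ((Finset.filter_subset _ _) (hCN h))).1 rfl
            refine ⟨insert v C, Finset.insert_subset hv (hCN.trans hNW), ?_, ?_⟩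
            · rw [Finset.coe_insert]
              refine hCcl.insert fun b hb hbv => ?_
              exact (Finset.mem_filter.1 (hCN (Finset.mem_coe.1 hb))).2
            · rw [Finset.card_insert_of_notMem hvC, hCca]
          · exact Or.inr ⟨I, hIN.trans hNW, hIind, hIca⟩
        · have hMc : (s + 1 + t).choose (s + 1) ≤ M.card := by omega
          rcases ih (s + 1) t M (by omega) hMc with ⟨C, hCM, hCcl, hCca⟩ | ⟨I, hIM, hIind, hIca⟩
          · exact Or.inl ⟨C, hCM.trans hMW, hCcl, hCca⟩
          · right
            have hvI : v ∉ I := fun h =>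
              (Finset.mem_erase.1 ((Finset.filter_subset _ _) (hIM h))).1 rfl
            refine ⟨insert v I, Finset.insert_subset hv (hIM.trans hMW), ?_, ?_⟩
            · intro u hu w hw hne
              rcases Finset.mem_insert.1 hu with rfl | hu' <;>
                rcases Finset.mem_insert.1 hw with rfl | hw'
              · exact absurd rfl hne
              · exact (Finset.mem_filter.1 (hIM hw')).2
              · exact fun h => (Finset.mem_filter.1 (hIM hu')).2 h.symm
              · exact hIind u hu' w hw' hne
            · rw [Finset.card_insert_of_notMem hvI, hIca]

/-- Greedy clique cover. -/
lemma cover_aux {V : Type} [DecidableEq V] (G : SimpleGraph V) (t r : ℕ) (ht : 1 ≤ t)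
    (H : ∀ W : Finset V, r ≤ W.card → ∃ C, C ⊆ W ∧ G.IsClique (C : Set V) ∧ t ≤ C.card) :
    ∀ W : Finset V, ∃ 𝒞 : Finset (Finset V), (∀ C ∈ 𝒞, G.IsClique (C : Set V)) ∧
      (∀ v ∈ W, ∃ C ∈ 𝒞, v ∈ C) ∧ 𝒞.card ≤ W.card / t + r := by
  intro W
  induction W using Finset.strongInduction with
  | _ W ih =>
    by_cases hr : r ≤ W.card
    · obtain ⟨C, hCW, hCcl, hCt⟩ := H W hr
      have hCne : C.Nonempty := Finset.card_pos.1 (lt_of_lt_of_le ht hCt)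
      obtain ⟨𝒞, h1, h2, h3⟩ := ih (W \ C) (Finset.sdiff_ssubset hCW hCne)
      refine ⟨insert C 𝒞, ?_, ?_, ?_⟩
      · intro D hD
        rcases Finset.mem_insert.1 hD with rfl | h
        · exact hCcl
        · exact h1 _ h
      · intro u hu
        by_cases huC : u ∈ C
        · exact ⟨C, Finset.mem_insert_self _ _, huC⟩
        · obtain ⟨D, hD, hud⟩ := h2 u (Finset.mem_sdiff.2 ⟨hu, huC⟩)
          exact ⟨D, Finset.mem_insert_of_mem hD, hud⟩
      · have hWc : (W \ C).card = W.card - C.card := Finset.card_sdiff_of_subset hCW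
        have htW : t ≤ W.card := hCt.trans (Finset.card_le_card hCW)
        have hdd : (W \ C).card / t ≤ (W.card - t) / t :=
          Nat.div_le_div_right (by omega)
        have hkey : (W.card - t) / t + 1 = W.card / t := by
          rw [← Nat.add_div_right (W.card - t) ht, Nat.sub_add_cancel htW]
        have := Finset.card_insert_le C 𝒞
        omega
    · refine ⟨W.image (fun v => {v}), ?_, ?_, ?_⟩
      · intro D hD
        obtain ⟨v, _, rfl⟩ := Finset.mem_image.1 hD
        simp
      · intro u hu
        exact ⟨{u}, Finset.mem_image_of_mem _ hu, Finset.mem_singleton_self u⟩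
      · calc (W.image fun v => ({v} : Finset V)).card ≤ W.card := Finset.card_image_le
          _ ≤ r := by omega
          _ ≤ W.card / t + r := Nat.le_add_left _ _

lemma le_indepNum {V : Type} [Fintype V] (G : SimpleGraph V) (I : Finset V)
    (h : ∀ u ∈ I, ∀ v ∈ I, u ≠ v → ¬ G.Adj u v) : I.card ≤ indepNum G :=
  le_csSup ⟨Fintype.card V, fun k hk => by
    obtain ⟨J, -, rfl⟩ := hk; exact J.card_le_univ⟩ ⟨I, h, rfl⟩

lemma one_le_indepNum {V : Type} [Fintype V] (G : SimpleGraph V) (hn : 1 ≤ Fintype.card V) :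
    1 ≤ indepNum G := by
  have : Nonempty V := Fintype.card_pos_iff.1 hn
  obtain ⟨v⟩ := this
  have := le_indepNum G {v} (by
    intro u hu w hw hne
    simp only [Finset.mem_singleton] at hu hw
    exact absurd (hu.trans hw.symm) hne)
  simpa using this

lemma ccn_le_card {V : Type} [Fintype V] (G : SimpleGraph V) :
    cliqueCoverNum G ≤ Fintype.card V := by
  classical
  refine le_trans (Nat.sInf_le ⟨Finset.univ.image (fun v => {v}), rfl, ?_, ?_⟩) ?_
  · intro D hD
    obtain ⟨v, -, rfl⟩ := Finset.mem_image.1 hD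
    simp
  · intro v
    exact ⟨{v}, Finset.mem_image_of_mem _ (Finset.mem_univ v), Finset.mem_singleton_self v⟩
  · simpa using Finset.card_image_le (f := fun v : V => ({v} : Finset V)) (s := Finset.univ)

lemma ccn_le_of_ramsey {V : Type} [Fintype V] (G : SimpleGraph V) (t r : ℕ) (ht : 1 ≤ t)
    (hchoose : ((t - 1) + indepNum G).choose (t - 1) ≤ r) :
    cliqueCoverNum G ≤ Fintype.card V / t + r := by
  classical
  have H : ∀ W : Finset V, r ≤ W.card →
      ∃ C, C ⊆ W ∧ G.IsClique (C : Set V) ∧ t ≤ C.card := by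
    intro W hW
    rcases ramseyAux G ((t - 1) + indepNum G) (t - 1) (indepNum G) W le_rfl
        (hchoose.trans hW) with ⟨C, h1, h2, h3⟩ | ⟨I, -, hI, hIca⟩
    · exact ⟨C, h1, h2, by omega⟩
    · exfalso
      have := le_indepNum G I hI
      omega
  obtain ⟨𝒞, h1, h2, h3⟩ := cover_aux G t r ht H Finset.univ
  refine le_trans (Nat.sInf_le ⟨𝒞, rfl, h1, fun v => h2 v (Finset.mem_univ v)⟩) ?_
  simpa [Finset.card_univ] using h3

lemma log_le_div_e {y : ℝ} (hy : 0 < y) : Real.log y ≤ y / Real.exp 1 := by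
  have h := Real.log_le_sub_one_of_pos (show 0 < y / Real.exp 1 by positivity)
  rw [Real.log_div hy.ne' (Real.exp_ne_zero 1), Real.log_exp] at h
  linarith

/-- Binomial bound: `log C(m+M, m) ≤ 3 √(mM)` for `1 ≤ m ≤ M`. -/
lemma choose_log_le (m M : ℕ) (hm : 1 ≤ m) (hmM : m ≤ M) :
    Real.log ((m + M).choose m) ≤ 3 * Real.sqrt ((m : ℝ) * M) := by
  have hm0 : (0:ℝ) < m := by exact_mod_cast hm
  have hM0 : (0:ℝ) < M := by exact_mod_cast lt_of_lt_of_le hm hmM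
  have hmMr : (m:ℝ) ≤ M := by exact_mod_cast hmM
  set Q := Real.sqrt ((m:ℝ) * M) with hQdef
  have hQ0 : 0 < Q := Real.sqrt_pos.2 (by positivity)
  have hQsq : Q ^ 2 = (m:ℝ) * M := Real.sq_sqrt (by positivity)
  have hmQ : (m:ℝ) ≤ Q := by
    nlinarith [Real.sqrt_nonneg ((m:ℝ) * M)]
  -- choose ≤ (2M)^m / m!
  have h1 : ((m + M).choose m : ℝ) ≤ ((2:ℝ) * M) ^ m / (m.factorial : ℝ) := by
    have hb := Nat.choose_le_pow_div (α := ℝ) m (m + M)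
    push_cast at hb
    refine hb.trans ?_
    gcongr
    all_goals first
      | positivity
      | (push_cast; linarith)
  -- log m! ≥ m log m - m
  have hfac : (m:ℝ) * Real.log m - Real.log (m.factorial : ℝ) ≤ m := by
    have h2 : ((m:ℝ)) ^ m / (m.factorial : ℝ) ≤ Real.exp m := Real.pow_div_factorial_le_exp (x := (m:ℝ)) (by positivity) m
    have h3 := Real.log_le_log (by positivity) h2
    rw [Real.log_div (by positivity) (by positivity), Real.log_pow, Real.log_exp] at h3
    linarith
  have hchpos : (0:ℝ) < ((m + M).choose m : ℝ) := by
    exact_mod_cast Nat.choose_pos (Nat.le_add_right m M)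
  have h4 := Real.log_le_log hchpos h1
  rw [Real.log_div (by positivity) (by positivity), Real.log_pow] at h4
  -- m * log(2M) - log m! ≤ m*log(2M) - m*log m + m = m * log(2M/m) + m
  have h5 : Real.log ((m + M).choose m)
      ≤ (m:ℝ) * (Real.log ((2:ℝ) * M) - Real.log m) + m := by
    nlinarith [hfac, h4]
  have hlog2M : Real.log ((2:ℝ) * M) - Real.log m = Real.log 2 + Real.log ((M:ℝ) / m) := by
    rw [Real.log_mul (by norm_num) (by positivity), Real.log_div (by positivity) (by positivity)]
    ring
  -- log(M/m) = 2 log(Q/m) ≤ 2 (Q/m)/e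
  have hMm : Real.log ((M:ℝ) / m) = 2 * Real.log (Q / m) := by
    have hsq : ((Q / m) ^ 2) = (M:ℝ) / m := by
      rw [div_pow, hQsq]
      field_simp
    rw [← hsq, Real.log_pow]
    norm_num
  have hQm : Real.log (Q / m) ≤ (Q / m) / Real.exp 1 := log_le_div_e (by positivity)
  have hexp1 : (2:ℝ) ≤ Real.exp 1 := by
    have := Real.add_one_le_exp 1
    linarith
  have hlog2 : Real.log 2 ≤ 1 := by
    have := Real.log_le_sub_one_of_pos (show (0:ℝ) < 2 by norm_num)
    linarith
  -- m * log(M/m) ≤ 2 Q / e ≤ Q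
  have h6 : (m:ℝ) * Real.log ((M:ℝ) / m) ≤ Q := by
    rw [hMm]
    have : (m:ℝ) * (2 * Real.log (Q / m)) ≤ (m:ℝ) * (2 * ((Q / m) / Real.exp 1)) := by
      apply mul_le_mul_of_nonneg_left _ hm0.le
      nlinarith [hQm]
    refine this.trans ?_
    have hme : (m:ℝ) * (2 * ((Q / m) / Real.exp 1)) = 2 * Q / Real.exp 1 := by
      field_simp
    rw [hme]
    rw [div_le_iff₀ (by positivity : (0:ℝ) < Real.exp 1)]
    nlinarith
  have h7 : (m:ℝ) * (Real.log 2 + 1) ≤ 2 * Q := by nlinarith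
  calc Real.log ((m + M).choose m)
      ≤ (m:ℝ) * (Real.log 2 + Real.log ((M:ℝ) / m)) + m := by rw [← hlog2M]; exact h5
    _ = (m:ℝ) * (Real.log 2 + 1) + (m:ℝ) * Real.log ((M:ℝ) / m) := by ring
    _ ≤ 2 * Q + Q := by nlinarith
    _ = 3 * Q := by ring

/-- There is a constant `c > 0` such that every finite simple
graph `G` on `n ≥ 2` vertices satisfies `χ̄(G) ≤ c · (n / (log n)²) · α(G)`. -/
theorem stmt12 : ∃ c : ℝ, 0 < c ∧ ∀ (V : Type) [Fintype V] (G : SimpleGraph V),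
    2 ≤ Fintype.card V →
    (cliqueCoverNum G : ℝ) ≤
      c * ((Fintype.card V : ℝ) / (Real.log (Fintype.card V)) ^ 2) * (indepNum G : ℝ) := by
  refine ⟨10000, by norm_num, ?_⟩
  intro V _ G hn
  set n := Fintype.card V with hndef
  set L := Real.log n with hLdef
  have hn2 : (2:ℝ) ≤ n := by exact_mod_cast hn
  have hn0 : (0:ℝ) < n := by linarith
  have hL0 : 0 < L := Real.log_pos (by linarith)
  have ha1 : 1 ≤ indepNum G := one_le_indepNum G (by omega)
  set a := indepNum G with hadef
  have ha0 : (1:ℝ) ≤ (a:ℝ) := by exact_mod_cast ha1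
  have hap : (0:ℝ) < (a:ℝ) := by linarith
  by_cases hcase : 100 ≤ L ∧ (a:ℝ) ≤ L ^ 2 / 200
  · obtain ⟨hL100, ha200⟩ := hcase
    have h200a : 200 * (a:ℝ) ≤ L ^ 2 := by
      rw [le_div_iff₀ (by norm_num)] at ha200
      linarith
    set x := L ^ 2 / (100 * (a:ℝ)) with hxdef
    have hx0 : 0 < x := by positivity
    have hx2 : (2:ℝ) ≤ x := by
      rw [hxdef, le_div_iff₀ (by positivity)]
      linarith
    set t := ⌊x⌋₊ with htdef
    have ht2 : 2 ≤ t := Nat.le_floor (by exact_mod_cast hx2)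
    have htx : (t:ℝ) ≤ x := Nat.floor_le hx0.le
    have hxt : x / 2 ≤ (t:ℝ) := by
      have := Nat.sub_one_lt_floor x
      rw [← htdef] at this
      linarith
    have ht0 : (0:ℝ) < t := by
      have : (1:ℝ) ≤ t := by exact_mod_cast le_trans (by norm_num) ht2
      linarith
    set s := t - 1 with hsdef
    have hs1 : 1 ≤ s := by omega
    have hsx : (s:ℝ) ≤ x := le_trans (by exact_mod_cast Nat.sub_le t 1) htx
    set r := ⌈Real.sqrt n⌉₊ with hrdef
    -- the binomial bound
    have hsymm : (s + a).choose s = (min a s + max a s).choose (min a s) := by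
      rcases le_total a s with h | h
      · rw [min_eq_left h, max_eq_right h, Nat.add_comm s a, Nat.choose_symm_add]
      · rw [min_eq_right h, max_eq_left h]
    have hkeylog : Real.log ((s + a).choose s) ≤ L / 2 := by
      rw [hsymm]
      have hmin1 : 1 ≤ min a s := le_min ha1 hs1
      have hminmax : min a s ≤ max a s := min_le_max
      have hb := choose_log_le (min a s) (max a s) hmin1 hminmax
      have hprod : ((min a s : ℕ) : ℝ) * ((max a s : ℕ) : ℝ) = (a:ℝ) * s := by
        rcases le_total a s with h | h
        · rw [min_eq_left h, max_eq_right h]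
        · rw [min_eq_right h, max_eq_left h]; ring
      rw [hprod] at hb
      have has : (a:ℝ) * s ≤ L ^ 2 / 100 := by
        have : (a:ℝ) * s ≤ (a:ℝ) * x := by nlinarith
        have hax : (a:ℝ) * x = L ^ 2 / 100 := by
          rw [hxdef]; field_simp
        linarith
      have hsq : Real.sqrt ((a:ℝ) * s) ≤ L / 10 := by
        have h1 : Real.sqrt ((a:ℝ) * s) ≤ Real.sqrt (L ^ 2 / 100) := Real.sqrt_le_sqrt has
        have h2 : L ^ 2 / 100 = (L / 10) ^ 2 := by ring
        rw [h2, Real.sqrt_sq (by positivity)] at h1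
        exact h1
      calc Real.log ((min a s + max a s).choose (min a s))
          ≤ 3 * Real.sqrt ((a:ℝ) * s) := hb
        _ ≤ 3 * (L / 10) := by linarith
        _ ≤ L / 2 := by linarith
    have hchpos : (0:ℝ) < ((s + a).choose s : ℝ) := by
      exact_mod_cast Nat.choose_pos (Nat.le_add_right s a)
    have hexp : ((s + a).choose s : ℝ) ≤ Real.exp (L / 2) :=
      (Real.log_le_iff_le_exp hchpos).1 hkeylog
    have hsqrtn : Real.exp (L / 2) = Real.sqrt n := by
      have h : Real.exp (L / 2) ^ 2 = (n:ℝ) := by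
        rw [sq, ← Real.exp_add]
        norm_num
        rw [hLdef, Real.exp_log hn0]
      rw [← h, Real.sqrt_sq (Real.exp_pos _).le]
    have hchoose : (s + a).choose s ≤ r := by
      have h1 : ((s + a).choose s : ℝ) ≤ (r:ℝ) := by
        rw [hrdef]
        exact (hexp.trans_eq hsqrtn).trans (Nat.le_ceil _)
      exact_mod_cast h1
    have hccn := ccn_le_of_ramsey G t r (by omega) (by rw [← hsdef]; exact hchoose)
    -- real arithmetic
    have hsq_nn : (0:ℝ) ≤ Real.sqrt n := Real.sqrt_nonneg _
    have hcast : (cliqueCoverNum G : ℝ) ≤ (n:ℝ) / (t:ℝ) + Real.sqrt n + 1 := by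
      have h1 : ((n / t : ℕ) : ℝ) ≤ (n:ℝ) / t := Nat.cast_div_le
      have h2 : (r:ℝ) < Real.sqrt n + 1 := Nat.ceil_lt_add_one hsq_nn
      have h3 := (Nat.cast_le (α := ℝ)).2 hccn
      push_cast at h3
      rw [← hndef] at h3
      calc (cliqueCoverNum G : ℝ) ≤ ((n / t : ℕ) : ℝ) + (r:ℝ) := by
            push_cast at h3 ⊢; linarith
        _ ≤ (n:ℝ) / t + (Real.sqrt n + 1) := add_le_add h1 h2.le
        _ = (n:ℝ) / t + Real.sqrt n + 1 := by ring
    have hnt : (n:ℝ) / t ≤ 200 * (a:ℝ) * n / L ^ 2 := by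
      have h1 : (n:ℝ) / t ≤ (n:ℝ) / (x / 2) :=
        div_le_div_of_nonneg_left hn0.le (by linarith) hxt
      have h2 : (n:ℝ) / (x / 2) = 200 * (a:ℝ) * n / L ^ 2 := by
        rw [hxdef]
        field_simp
        ring
      linarith
    -- √n is large: 2 L² ≤ √n
    have hcube : (L / 2) ^ 3 / 6 ≤ Real.exp (L / 2) := by
      have := Real.pow_div_factorial_le_exp (L / 2) (by linarith) 3
      norm_num [Nat.factorial] at this
      linarith
    have h2L : 2 * L ^ 2 ≤ Real.sqrt n := by
      rw [← hsqrtn]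
      have h96 : 100 * L ^ 2 ≤ L * L ^ 2 :=
        mul_le_mul_of_nonneg_right hL100 (sq_nonneg L)
      have heq1 : (L / 2) ^ 3 / 6 = L * L ^ 2 / 48 := by ring
      linarith
    have hsn : Real.sqrt n * Real.sqrt n = (n:ℝ) := Real.mul_self_sqrt hn0.le
    have hsqb : 2 * Real.sqrt n ≤ (n:ℝ) / L ^ 2 := by
      rw [le_div_iff₀ (by positivity)]
      have := mul_le_mul_of_nonneg_left h2L hsq_nn
      nlinarith
    have hfinal : (cliqueCoverNum G : ℝ) ≤ 201 * ((n:ℝ) / L ^ 2) * a := by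
      have hstep : (cliqueCoverNum G : ℝ) ≤ 200 * (a:ℝ) * n / L ^ 2 + 2 * Real.sqrt n := by
        linarith
      have hnl : (0:ℝ) < (n:ℝ) / L ^ 2 := by positivity
      have hmul : ((n:ℝ) / L ^ 2) * 1 ≤ ((n:ℝ) / L ^ 2) * a :=
        mul_le_mul_of_nonneg_left ha0 hnl.le
      have heq : 200 * (a:ℝ) * n / L ^ 2 = 200 * ((n:ℝ) / L ^ 2) * a := by ring
      linarith
    have hpos : (0:ℝ) ≤ ((n:ℝ) / L ^ 2) * a := by positivity
    calc (cliqueCoverNum G : ℝ) ≤ 201 * ((n:ℝ) / L ^ 2) * a := hfinal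
      _ ≤ 10000 * ((n:ℝ) / L ^ 2) * a := by linarith
  · have hccn : (cliqueCoverNum G : ℝ) ≤ n := by exact_mod_cast ccn_le_card G
    have hLa : L ^ 2 ≤ 10000 * (a:ℝ) := by
      rcases not_and_or.1 hcase with h | h
      · push_neg at h
        have := mul_le_mul h.le h.le hL0.le (by norm_num : (0:ℝ) ≤ 100)
        nlinarith
      · push_neg at h
        rw [div_lt_iff₀ (by norm_num : (0:ℝ) < 200)] at h
        linarith
    have h1 : (1:ℝ) ≤ 10000 * (a:ℝ) / L ^ 2 := (one_le_div (by positivity)).2 hLa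
    have hgoal : (n:ℝ) ≤ 10000 * ((n:ℝ) / L ^ 2) * a := by
      calc (n:ℝ) = (n:ℝ) * 1 := by ring
        _ ≤ (n:ℝ) * (10000 * (a:ℝ) / L ^ 2) := mul_le_mul_of_nonneg_left h1 hn0.le
        _ = 10000 * ((n:ℝ) / L ^ 2) * a := by ring
    linarith
end

section
/- Every finite quasi-line graph G satisfies χ̄(G) ≤ 2 · α(G). -/
/-- Every finite quasi-line graph `G` (the neighborhood of
every vertex can be partitioned into two, possibly empty, cliques) satisfies
`χ̄(G) ≤ 2 · α(G)`. -/
theorem stmt13 (V : Type) [Fintype V] (G : SimpleGraph V)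
    (hql : ∀ v : V, ∃ C₁ C₂ : Set V, G.IsClique C₁ ∧ G.IsClique C₂ ∧
      Disjoint C₁ C₂ ∧ G.neighborSet v = C₁ ∪ C₂) :
    cliqueCoverNum G ≤ 2 * indepNum G := by
  classical
  set S : Set ℕ :=
    {k | ∃ I : Finset V, (∀ u ∈ I, ∀ v ∈ I, u ≠ v → ¬ G.Adj u v) ∧ I.card = k} with hS
  have h0 : (0 : ℕ) ∈ S := ⟨∅, by simp⟩
  have hbdd : BddAbove S := by
    refine ⟨Fintype.card V, ?_⟩
    rintro k ⟨I, _, rfl⟩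
    exact Finset.card_le_univ I
  have hmem : sSup S ∈ S := Nat.sSup_mem ⟨0, h0⟩ hbdd
  obtain ⟨I, hI, hcard⟩ := hmem
  have hmax : ∀ w, w ∉ I → ∃ v ∈ I, G.Adj v w := by
    intro w hw
    by_contra h
    push_neg at h
    have hind : ∀ u ∈ insert w I, ∀ v ∈ insert w I, u ≠ v → ¬ G.Adj u v := by
      intro u hu v hv hne
      simp only [Finset.mem_insert] at hu hv
      rcases hu with rfl | hu
      · rcases hv with rfl | hv
        · exact absurd rfl hne
        · exact fun hadj => h v hv hadj.symm
      · rcases hv with rfl | hv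
        · exact fun hadj => h u hu hadj
        · exact hI u hu v hv hne
    have hmem' : (insert w I).card ∈ S := ⟨_, hind, rfl⟩
    have hle := le_csSup hbdd hmem'
    rw [Finset.card_insert_of_notMem hw, hcard] at hle
    omega
  choose C₁ C₂ hC₁ hC₂ _ hN using hql
  set D₁ : V → Finset V := fun v => insert v (C₁ v).toFinset with hD₁
  set D₂ : V → Finset V := fun v => (C₂ v).toFinset with hD₂
  set 𝒞 : Finset (Finset V) := I.biUnion (fun v => {D₁ v, D₂ v}) with h𝒞
  have hadj₁ : ∀ v, ∀ b ∈ C₁ v, G.Adj v b := by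
    intro v b hb
    have : b ∈ G.neighborSet v := by rw [hN]; exact Or.inl hb
    exact this
  have hclique : ∀ C ∈ 𝒞, G.IsClique (C : Set V) := by
    intro C hC
    simp only [h𝒞, Finset.mem_biUnion, Finset.mem_insert, Finset.mem_singleton] at hC
    obtain ⟨v, _, rfl | rfl⟩ := hC
    · have : ((D₁ v : Set V)) = insert v (C₁ v) := by
        simp [hD₁, Set.coe_toFinset]
      rw [this]
      exact (hC₁ v).insert (fun b hb _ => hadj₁ v b hb)
    · have : ((D₂ v : Set V)) = C₂ v := by simp [hD₂, Set.coe_toFinset]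
      rw [this]
      exact hC₂ v
  have hcover : ∀ w : V, ∃ C ∈ 𝒞, w ∈ C := by
    intro w
    by_cases hw : w ∈ I
    · refine ⟨D₁ w, ?_, Finset.mem_insert_self _ _⟩
      simp only [h𝒞, Finset.mem_biUnion]
      exact ⟨w, hw, by simp⟩
    · obtain ⟨v, hv, hadj⟩ := hmax w hw
      have hwN : w ∈ G.neighborSet v := hadj
      rw [hN] at hwN
      rcases hwN with hw1 | hw2
      · refine ⟨D₁ v, ?_, ?_⟩
        · simp only [h𝒞, Finset.mem_biUnion]; exact ⟨v, hv, by simp⟩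
        · exact Finset.mem_insert_of_mem (Set.mem_toFinset.mpr hw1)
      · refine ⟨D₂ v, ?_, ?_⟩
        · simp only [h𝒞, Finset.mem_biUnion]; exact ⟨v, hv, by simp⟩
        · exact Set.mem_toFinset.mpr hw2
  have hcardC : 𝒞.card ≤ 2 * I.card := by
    calc 𝒞.card ≤ ∑ v ∈ I, ({D₁ v, D₂ v} : Finset (Finset V)).card :=
          Finset.card_biUnion_le
      _ ≤ ∑ _v ∈ I, 2 := Finset.sum_le_sum (fun v _ => Finset.card_insert_le _ _)
      _ = 2 * I.card := by rw [Finset.sum_const, smul_eq_mul, mul_comm]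
  have hmemT : 𝒞.card ∈ {k | ∃ 𝒟 : Finset (Finset V), 𝒟.card = k ∧
      (∀ C ∈ 𝒟, G.IsClique (C : Set V)) ∧ ∀ v : V, ∃ C ∈ 𝒟, v ∈ C} :=
    ⟨𝒞, rfl, hclique, hcover⟩
  have h1 : cliqueCoverNum G ≤ 𝒞.card := Nat.sInf_le hmemT
  have h2 : indepNum G = I.card := by rw [indepNum, ← hS, hcard]
  rw [h2]
  exact h1.trans hcardC
end
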